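/- arXiv:2203.01848 — 7 statements merged into one kernel-verified Lean document; each statement's English description precedes it below -/
import Mathlib

section
/- Let G be a directed mixed graph, and let X and Y be distinct nodes and 𝐖 and 𝐙 be sets of nodes of G such that {X}, {Y}, 𝐖, 𝐙 are pairwise disjoint. If the minimal σ-separation X ⊥ Y | 𝐖 ∪ [𝐙] holds in G (that is, X ⊥ Y | 𝐖 ∪ 𝐙 and X ⊥̸ Y | 𝐖 ∪ 𝐙′ for every proper subset 𝐙′ ⊊ 𝐙), then 𝐙 ⊆ an({X, Y} ∪ 𝐖). -/
/-- The three ways an edge of a directed mixed graph can occur on a walk,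
when traversed from left to right: `fwd` is a directed edge pointing to the
right node, `bwd` is a directed edge pointing to the left node, and `bi` is
a bidirected edge. -/
inductive EdgeDir : Type
  | fwd
  | bwd
  | bi
  deriving DecidableEq

/-- The edge has an arrowhead at its right endpoint. -/
def EdgeDir.headAtRight (e : EdgeDir) : Prop := e = .fwd ∨ e = .bi

/-- The edge has an arrowhead at its left endpoint. -/
def EdgeDir.headAtLeft (e : EdgeDir) : Prop := e = .bwd ∨ e = .bi

/-- A directed mixed graph (DMG) on node type `α`: an irreflexive relation of
directed edges and an irreflexive symmetric relation of bidirected edges. -/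
structure DMG (α : Type*) where
  dir : α → α → Prop
  bidir : α → α → Prop
  dir_irrefl : ∀ x, ¬ dir x x
  bidir_irrefl : ∀ x, ¬ bidir x x
  bidir_symm : ∀ x y, bidir x y → bidir y x

namespace DMG

variable {α : Type*}

/-- `G.Anc x y`: there is a directed path (possibly of length zero) from `x` to `y`,
i.e. `x` is an ancestor of `y` (equivalently, `y` is a descendant of `x`). -/
def Anc (G : DMG α) (x y : α) : Prop := Relation.ReflTransGen G.dir x y

/-- Ancestors of a set of nodes. -/
def ancSet (G : DMG α) (S : Set α) : Set α := {x | ∃ y ∈ S, G.Anc x y}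

/-- The strongly connected component of `x`: all nodes that are both ancestors
and descendants of `x`. -/
def scc (G : DMG α) (x : α) : Set α := {y | G.Anc y x ∧ G.Anc x y}

/-- Validity of one step of a walk, from `a` to `b`, traversed as `e`. -/
def StepValid (G : DMG α) (a : α) (e : EdgeDir) (b : α) : Prop :=
  match e with
  | .fwd => G.dir a b
  | .bwd => G.dir b a
  | .bi => G.bidir a b

/-- A walk from `x` to `y` in a DMG `G`: an alternating sequence of `n + 1` nodes
and `n` edges of `G`. -/
structure Walk (G : DMG α) (x y : α) where
  n : ℕ
  node : Fin (n + 1) → α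
  edge : Fin n → EdgeDir
  first_eq : node 0 = x
  last_eq : node (Fin.last n) = y
  valid : ∀ i : Fin n, G.StepValid (node i.castSucc) (edge i) (node i.succ)

namespace Walk

variable {G : DMG α} {x y : α}

/-- A path is a walk all of whose nodes are distinct. -/
def IsPath (w : Walk G x y) : Prop := Function.Injective w.node

/-- The interior node at position `i + 1` of the walk is a collider: both
adjacent edges have an arrowhead at it. -/
def IsColliderAt (w : Walk G x y) (i : ℕ) (h : i + 1 < w.n) : Prop :=
  (w.edge ⟨i, by omega⟩).headAtRight ∧ (w.edge ⟨i + 1, h⟩).headAtLeft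

/-- The walk is σ-blocked by the conditioning set `C`. -/
def Blocked (w : Walk G x y) (C : Set α) : Prop :=
  x ∈ C ∨ y ∈ C ∨
  (∃ (i : ℕ) (h : i + 1 < w.n), w.IsColliderAt i h ∧
    w.node ⟨i + 1, by omega⟩ ∉ G.ancSet C) ∨
  (∃ (i : ℕ) (h : i + 1 < w.n), ¬ w.IsColliderAt i h ∧
    w.node ⟨i + 1, by omega⟩ ∈ C ∧
    ((w.edge ⟨i, by omega⟩ = .bwd ∧
        w.node ⟨i, by omega⟩ ∉ G.scc (w.node ⟨i + 1, by omega⟩)) ∨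
     (w.edge ⟨i + 1, h⟩ = .fwd ∧
        w.node ⟨i + 2, by omega⟩ ∉ G.scc (w.node ⟨i + 1, by omega⟩))))

end Walk

/-- σ-separation: every path between `x` and `y` is σ-blocked by `C`. -/
def sigmaSep (G : DMG α) (x y : α) (C : Set α) : Prop :=
  ∀ w : Walk G x y, w.IsPath → w.Blocked C

/-- A confounding path between `x` and `y`: a path of nonzero length whose first
edge has an arrowhead at `x`, whose last edge has an arrowhead at `y`, and all of
whose non-endpoint nodes are non-colliders. -/
def IsConfoundingPath {G : DMG α} {x y : α} (w : Walk G x y) : Prop :=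
  w.IsPath ∧ ∃ h : 0 < w.n,
    (w.edge ⟨0, h⟩).headAtLeft ∧ (w.edge ⟨w.n - 1, by omega⟩).headAtRight ∧
    ∀ (i : ℕ) (hi : i + 1 < w.n), ¬ w.IsColliderAt i hi

/-- `x` and `y` are confounded in `G` if some confounding path connects them. -/
def Confounded (G : DMG α) (x y : α) : Prop := ∃ w : Walk G x y, IsConfoundingPath w

/-- A directed path from `x` to `y` (of length at least one) all of whose
intermediate nodes avoid `M`. -/
def DirPathAvoiding (G : DMG α) (M : Set α) (x y : α) : Prop :=
  ∃ l : List α, List.Chain G.dir x (l ++ [y]) ∧ ∀ v ∈ l, v ∉ M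

/-- A path between `x` and `y` with an arrowhead at `x` and an arrowhead at `y`,
all of whose intermediate nodes lie outside `M` and are non-colliders. -/
def BidirPathAvoiding (G : DMG α) (M : Set α) (x y : α) : Prop :=
  ∃ w : Walk G x y, w.IsPath ∧ (∃ h : 0 < w.n,
    (w.edge ⟨0, h⟩).headAtLeft ∧ (w.edge ⟨w.n - 1, by omega⟩).headAtRight) ∧
    ∀ (i : ℕ) (hi : i + 1 < w.n),
      w.node ⟨i + 1, by omega⟩ ∉ M ∧ ¬ w.IsColliderAt i hi

/-- The latent projection of `G` onto the node set `M`. -/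
def latentProj (G : DMG α) (M : Set α) : DMG M where
  dir a b := a.1 ≠ b.1 ∧ DirPathAvoiding G M a.1 b.1
  bidir a b := a.1 ≠ b.1 ∧
    (BidirPathAvoiding G M a.1 b.1 ∨ BidirPathAvoiding G M b.1 a.1)
  dir_irrefl := fun _a h => h.1 rfl
  bidir_irrefl := fun _a h => h.1 rfl
  bidir_symm := fun _a _b h => ⟨Ne.symm h.1, Or.symm h.2⟩

end DMG

section Aux

variable {α : Type*} {G : DMG α}

lemma ancSet_closed_aux {S : Set α} {a b : α} (hd : G.dir a b) (hb : b ∈ G.ancSet S) :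
    a ∈ G.ancSet S := by
  obtain ⟨y, hy, hby⟩ := hb
  exact ⟨y, hy, Relation.ReflTransGen.head hd hby⟩

/-- Key lemma: on a walk from `X` to `Y` all of whose colliders lie in an
anc-closed set `A` containing `X` and `Y`, every non-collider lies in `A`. -/
lemma noncollider_mem_anc_aux {X Y : α} (w : DMG.Walk G X Y) {A : Set α}
    (hX : X ∈ A) (hY : Y ∈ A)
    (hcl : ∀ a b, G.dir a b → b ∈ A → a ∈ A)
    (hcol : ∀ i (h : i + 1 < w.n), w.IsColliderAt i h → w.node ⟨i + 1, by omega⟩ ∈ A)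
    (i : ℕ) (h : i + 1 < w.n) (hnc : ¬ w.IsColliderAt i h) :
    w.node ⟨i + 1, by omega⟩ ∈ A := by
  -- directed edges pointing right lead (within the walk) to a collider or to Y
  have hR : ∀ m j (hj : j < w.n), w.n - j ≤ m → w.edge ⟨j, hj⟩ = .fwd →
      w.node ⟨j, by omega⟩ ∈ A := by
    intro m
    induction m with
    | zero => intro j hj hm; omega
    | succ m ih =>
      intro j hj hm he
      have hstep : G.dir (w.node ⟨j, by omega⟩) (w.node ⟨j + 1, by omega⟩) := by
        have hv := w.valid ⟨j, hj⟩
        rw [he] at hv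
        exact hv
      refine hcl _ _ hstep ?_
      rcases Nat.lt_or_ge (j + 1) w.n with h1 | h1
      · by_cases hc : w.IsColliderAt j h1
        · exact hcol j h1 hc
        · have he2 : w.edge ⟨j + 1, h1⟩ = .fwd := by
            cases hv : w.edge ⟨j + 1, h1⟩ with
            | fwd => rfl
            | bwd => exact absurd ⟨Or.inl he, Or.inl hv⟩ hc
            | bi => exact absurd ⟨Or.inl he, Or.inr hv⟩ hc
          exact ih (j + 1) h1 (by omega) he2
      · have hlast : (⟨j + 1, by omega⟩ : Fin (w.n + 1)) = Fin.last w.n := by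
          apply Fin.ext; simp; omega
        rw [hlast, w.last_eq]; exact hY
  -- directed edges pointing left lead (within the walk) to a collider or to X
  have hL : ∀ j (hj : j < w.n), w.edge ⟨j, hj⟩ = .bwd →
      w.node ⟨j + 1, by omega⟩ ∈ A := by
    intro j
    induction j with
    | zero =>
      intro hj he
      have hstep : G.dir (w.node ⟨1, by omega⟩) (w.node ⟨0, by omega⟩) := by
        have hv := w.valid ⟨0, hj⟩
        rw [he] at hv
        exact hv
      refine hcl _ _ hstep ?_
      have h0 : (⟨0, by omega⟩ : Fin (w.n + 1)) = 0 := rfl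
      rw [h0, w.first_eq]; exact hX
    | succ j ih =>
      intro hj he
      have hstep : G.dir (w.node ⟨j + 2, by omega⟩) (w.node ⟨j + 1, by omega⟩) := by
        have hv := w.valid ⟨j + 1, hj⟩
        rw [he] at hv
        exact hv
      refine hcl _ _ hstep ?_
      by_cases hc : w.IsColliderAt j hj
      · exact hcol j hj hc
      · cases hv : w.edge ⟨j, by omega⟩ with
        | bwd => exact ih (by omega) hv
        | fwd => exact absurd ⟨Or.inl hv, Or.inl he⟩ hc
        | bi => exact absurd ⟨Or.inr hv, Or.inl he⟩ hc
  by_cases hb : w.edge ⟨i, by omega⟩ = .bwd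
  · exact hL i (by omega) hb
  · have hr : (w.edge ⟨i, by omega⟩).headAtRight := by
      cases hv : w.edge ⟨i, by omega⟩ with
      | fwd => exact Or.inl rfl
      | bi => exact Or.inr rfl
      | bwd => exact absurd hv hb
    have hf : w.edge ⟨i + 1, h⟩ = .fwd := by
      cases hv : w.edge ⟨i + 1, h⟩ with
      | fwd => rfl
      | bwd => exact absurd ⟨hr, Or.inl hv⟩ hnc
      | bi => exact absurd ⟨hr, Or.inr hv⟩ hnc
    exact hR w.n (i + 1) h (by omega) hf

end Aux

/-- a minimal σ-separation `X ⊥ Y | W ∪ [Z]` implies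
`Z ⊆ an({X, Y} ∪ W)`. -/
theorem minimal_sigma_separation_implies_ancestors
    {α : Type*} [Fintype α] (G : DMG α) (X Y : α) (W Z : Set α)
    (hXY : X ≠ Y) (hXW : X ∉ W) (hXZ : X ∉ Z) (hYW : Y ∉ W) (hYZ : Y ∉ Z)
    (hWZ : Disjoint W Z)
    (hsep : G.sigmaSep X Y (W ∪ Z))
    (hmin : ∀ Z' ⊂ Z, ¬ G.sigmaSep X Y (W ∪ Z')) :
    Z ⊆ G.ancSet ({X, Y} ∪ W) := by
  classical
  set A := G.ancSet ({X, Y} ∪ W) with hA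
  set Z' := Z ∩ A with hZ'def
  have hXA : X ∈ A := ⟨X, Or.inl (Or.inl rfl), Relation.ReflTransGen.refl⟩
  have hYA : Y ∈ A := ⟨Y, Or.inl (Or.inr rfl), Relation.ReflTransGen.refl⟩
  have hcl : ∀ a b, G.dir a b → b ∈ A → a ∈ A := fun a b hd hb => ancSet_closed_aux hd hb
  have hsub : G.ancSet (W ∪ Z') ⊆ A := by
    rintro c ⟨y, hy, hcy⟩
    rcases hy with hy | hy
    · exact ⟨y, Or.inr hy, hcy⟩
    · obtain ⟨t, ht, hyt⟩ := hy.2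
      exact ⟨t, ht, hcy.trans hyt⟩
  have hmono : G.ancSet (W ∪ Z') ⊆ G.ancSet (W ∪ Z) := by
    rintro c ⟨y, hy, hcy⟩
    rcases hy with hy | hy
    · exact ⟨y, Or.inl hy, hcy⟩
    · exact ⟨y, Or.inr hy.1, hcy⟩
  have hsep' : G.sigmaSep X Y (W ∪ Z') := by
    intro w hp
    by_contra hnb
    have hcol : ∀ i (h : i + 1 < w.n), w.IsColliderAt i h →
        w.node ⟨i + 1, by omega⟩ ∈ G.ancSet (W ∪ Z') := by
      intro i h hc
      by_contra hna
      exact hnb (Or.inr (Or.inr (Or.inl ⟨i, h, hc, hna⟩)))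
    have hcolA : ∀ i (h : i + 1 < w.n), w.IsColliderAt i h →
        w.node ⟨i + 1, by omega⟩ ∈ A := fun i h hc => hsub (hcol i h hc)
    rcases hsep w hp with hb | hb | ⟨i, h, hc, hna⟩ | ⟨i, h, hnco, hmem, hcond⟩
    · rcases hb with hb | hb
      · exact hXW hb
      · exact hXZ hb
    · rcases hb with hb | hb
      · exact hYW hb
      · exact hYZ hb
    · exact hna (hmono (hcol i h hc))
    · have hvA : w.node ⟨i + 1, by omega⟩ ∈ A :=
        noncollider_mem_anc_aux w hXA hYA hcl hcolA i h hnco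
      have hvC' : w.node ⟨i + 1, by omega⟩ ∈ W ∪ Z' := by
        rcases hmem with hm | hm
        · exact Or.inl hm
        · exact Or.inr ⟨hm, hvA⟩
      exact hnb (Or.inr (Or.inr (Or.inr ⟨i, h, hnco, hvC', hcond⟩)))
  have hnotss : ¬ Z' ⊂ Z := fun hss => hmin Z' hss hsep'
  have hZZ : Z' = Z := by
    by_contra hne
    exact hnotss ⟨Set.inter_subset_left, fun hsub2 => hne (le_antisymm Set.inter_subset_left hsub2)⟩
  intro z hz
  have hz' : z ∈ Z' := hZZ ▸ hz
  exact hz'.2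
end

section
/- Let G be a directed mixed graph, and let X and Y be distinct nodes and 𝐖 and 𝐙 be sets of nodes of G such that {X}, {Y}, 𝐖, 𝐙 are pairwise disjoint. If the minimal σ-connection X ⊥̸ Y | 𝐖 ∪ [𝐙] holds in G (that is, X ⊥̸ Y | 𝐖 ∪ 𝐙 and X ⊥ Y | 𝐖 ∪ 𝐙′ for every proper subset 𝐙′ ⊊ 𝐙), then 𝐙 ∩ an({X, Y} ∪ 𝐖) = ∅. -/
/-! Suppose `z ∈ Z` is an ancestor of `X`, `Y` or `W`, and put `C' = W ∪ (Z \ {z})`. A σ-open path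
given `W ∪ Z` is still σ-open given `C'`, except at colliders `v` whose only conditioned
descendant is `z`; such a `v` is then an ancestor of `X` or `Y` (an ancestor of `W` would lie in
`an(C')`). If, say, `z ∈ an(X)`, replace the part of the path before the last such collider `v`
by a directed path from `v` to `X`, traversed backwards: its nodes are descendants of `v`, hence
outside `C'`, and it has no colliders. This is a σ-open walk given `C'`, and shortcutting its
repeated nodes keeps it σ-open, giving a σ-open path that contradicts minimality. -/

namespace EdgeDir

def flip : EdgeDir → EdgeDir
  | .fwd => .bwd
  | .bwd => .fwd
  | .bi => .bi

def IsCollider (e₁ e₂ : EdgeDir) : Prop := e₁.headAtRight ∧ e₂.headAtLeft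

lemma isCollider_flip {e₁ e₂ : EdgeDir} : IsCollider e₂.flip e₁.flip ↔ IsCollider e₁ e₂ := by
  cases e₁ <;> cases e₂ <;> simp [IsCollider, flip, headAtRight, headAtLeft]

lemma flip_eq_bwd {e : EdgeDir} : e.flip = .bwd ↔ e = .fwd := by
  cases e <;> simp [flip]

lemma flip_eq_fwd {e : EdgeDir} : e.flip = .fwd ↔ e = .bwd := by
  cases e <;> simp [flip]

lemma eq_fwd_of_not_headAtLeft {e : EdgeDir} (h : ¬ e.headAtLeft) : e = .fwd := by
  cases e <;> simp_all [headAtLeft]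

lemma eq_bwd_of_not_headAtRight {e : EdgeDir} (h : ¬ e.headAtRight) : e = .bwd := by
  cases e <;> simp_all [headAtRight]

lemma not_isCollider_bwd_left (e : EdgeDir) : ¬ IsCollider .bwd e := by
  simp [IsCollider, headAtRight]

lemma not_isCollider_fwd_right (e : EdgeDir) : ¬ IsCollider e .fwd := by
  simp [IsCollider, headAtLeft]

end EdgeDir

open EdgeDir

namespace DMG

variable {α : Type*} {G : DMG α}

lemma stepValid_flip {a b : α} {e : EdgeDir} (h : G.StepValid a e b) :
    G.StepValid b e.flip a := by
  cases e with
  | fwd => exact h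
  | bwd => exact h
  | bi => exact G.bidir_symm _ _ h

lemma mem_ancSet_of_anc {a b : α} {C : Set α} (h : G.Anc a b) (hb : b ∈ G.ancSet C) :
    a ∈ G.ancSet C :=
  let ⟨c, hc, hbc⟩ := hb
  ⟨c, hc, h.trans hbc⟩

lemma ancSet_mono {S T : Set α} (h : S ⊆ T) : G.ancSet S ⊆ G.ancSet T :=
  fun _ ⟨u, hu, hau⟩ => ⟨u, h hu, hau⟩

lemma anc_of_mem_ancSet_insert {v z : α} {C : Set α} (hv : v ∈ G.ancSet (insert z C))
    (hvC : v ∉ G.ancSet C) : G.Anc v z := by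
  obtain ⟨u, rfl | hu, hvu⟩ := hv
  · exact hvu
  · exact absurd ⟨u, hu, hvu⟩ hvC

/-- Conditions (ii) and (iii) of σ-blocking fail at the middle node `b` of `a -e₁- b -e₂- c`. -/
def OpenTriple (C : Set α) (a : α) (e₁ : EdgeDir) (b : α) (e₂ : EdgeDir) (c : α) : Prop :=
  (IsCollider e₁ e₂ → b ∈ G.ancSet C) ∧
  (¬ IsCollider e₁ e₂ → b ∈ C → (e₁ = .bwd → a ∈ G.scc b) ∧ (e₂ = .fwd → c ∈ G.scc b))

section OpenTriple

variable {C C' : Set α} {a b c : α} {e₁ e₂ : EdgeDir}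

lemma OpenTriple.flip (h : G.OpenTriple C a e₁ b e₂ c) : G.OpenTriple C c e₂.flip b e₁.flip a :=
  ⟨fun hcol => h.1 (isCollider_flip.1 hcol), fun hcol hb =>
    ⟨fun he => (h.2 (mt isCollider_flip.2 hcol) hb).2 (flip_eq_bwd.1 he),
     fun he => (h.2 (mt isCollider_flip.2 hcol) hb).1 (flip_eq_fwd.1 he)⟩⟩

lemma OpenTriple.mono (h : G.OpenTriple C a e₁ b e₂ c) (hC : C' ⊆ C)
    (hcol : IsCollider e₁ e₂ → b ∈ G.ancSet C') : G.OpenTriple C' a e₁ b e₂ c :=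
  ⟨hcol, fun hnc hb => h.2 hnc (hC hb)⟩

lemma openTriple_of_not_isCollider (hcol : ¬ IsCollider e₁ e₂) (hb : b ∉ C) :
    G.OpenTriple C a e₁ b e₂ c :=
  ⟨fun h => absurd h hcol, fun _ h => absurd h hb⟩

end OpenTriple

/-- A walk in `G` whose nodes and edges are indexed by all of `ℕ`, only the first `n + 1` nodes
and `n` edges being meaningful; cutting and gluing such walks needs no `Fin` casts. -/
structure NatWalk (G : DMG α) where
  n : ℕ
  node : ℕ → α
  edge : ℕ → EdgeDir
  valid : ∀ i < n, G.StepValid (node i) (edge i) (node (i + 1))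

namespace NatWalk

/-- Condition (i) of σ-blocking, on the endpoints, is not part of this. -/
def InteriorOpen (w : NatWalk G) (C : Set α) : Prop :=
  ∀ i, i + 1 < w.n →
    G.OpenTriple C (w.node i) (w.edge i) (w.node (i + 1)) (w.edge (i + 1)) (w.node (i + 2))

section Operations

variable (w : NatWalk G)

def rev : NatWalk G where
  n := w.n
  node k := w.node (w.n - k)
  edge k := (w.edge (w.n - 1 - k)).flip
  valid k hk := by
    rw [show w.n - k = w.n - 1 - k + 1 by omega, show w.n - (k + 1) = w.n - 1 - k by omega]
    exact stepValid_flip (w.valid _ (by omega))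

def take (i : ℕ) (hi : i ≤ w.n) : NatWalk G where
  n := i
  node := w.node
  edge := w.edge
  valid k hk := w.valid k (by omega)

def drop (i : ℕ) (hi : i ≤ w.n) : NatWalk G where
  n := w.n - i
  node k := w.node (i + k)
  edge k := w.edge (i + k)
  valid k hk := w.valid (i + k) (by omega)

def append (w' : NatWalk G) (h : w.node w.n = w'.node 0) : NatWalk G where
  n := w.n + w'.n
  node k := if k ≤ w.n then w.node k else w'.node (k - w.n)
  edge k := if k < w.n then w.edge k else w'.edge (k - w.n)
  valid k hk := by
    by_cases hk₁ : k < w.n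
    · rw [if_pos hk₁, if_pos hk₁.le, if_pos (show k + 1 ≤ w.n from hk₁)]
      exact w.valid k hk₁
    · rw [if_neg hk₁, if_neg (by omega : ¬ k + 1 ≤ w.n), show k + 1 - w.n = k - w.n + 1 by omega]
      split_ifs with hk₂
      · rw [show k = w.n by omega, h, Nat.sub_self]
        exact w'.valid 0 (by omega)
      · exact w'.valid _ (by omega)

end Operations

section Basic

variable {w w' : NatWalk G} {C C' : Set α}

@[simp] lemma rev_n : w.rev.n = w.n := rfl

@[simp] lemma rev_node (k : ℕ) : w.rev.node k = w.node (w.n - k) := rfl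

@[simp] lemma rev_edge (k : ℕ) : w.rev.edge k = (w.edge (w.n - 1 - k)).flip := rfl

@[simp] lemma take_n {i : ℕ} {hi} : (w.take i hi).n = i := rfl

@[simp] lemma take_node {i : ℕ} {hi} (k : ℕ) : (w.take i hi).node k = w.node k := rfl

@[simp] lemma take_edge {i : ℕ} {hi} (k : ℕ) : (w.take i hi).edge k = w.edge k := rfl

@[simp] lemma drop_n {i : ℕ} {hi} : (w.drop i hi).n = w.n - i := rfl

@[simp] lemma drop_node {i : ℕ} {hi} (k : ℕ) : (w.drop i hi).node k = w.node (i + k) := rfl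

@[simp] lemma drop_edge {i : ℕ} {hi} (k : ℕ) : (w.drop i hi).edge k = w.edge (i + k) := rfl

@[simp] lemma append_n {h} : (w.append w' h).n = w.n + w'.n := rfl

lemma append_node_of_le {h} {k : ℕ} (hk : k ≤ w.n) : (w.append w' h).node k = w.node k :=
  if_pos hk

lemma append_node_of_ge {h} {k : ℕ} (hk : w.n ≤ k) :
    (w.append w' h).node k = w'.node (k - w.n) := by
  by_cases hk' : k ≤ w.n
  · rw [append_node_of_le hk', show k = w.n by omega, h, Nat.sub_self]
  · exact if_neg hk'

lemma append_edge_of_lt {h} {k : ℕ} (hk : k < w.n) : (w.append w' h).edge k = w.edge k :=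
  if_pos hk

lemma append_edge_of_ge {h} {k : ℕ} (hk : w.n ≤ k) :
    (w.append w' h).edge k = w'.edge (k - w.n) :=
  if_neg (by omega)

lemma InteriorOpen.rev (hw : w.InteriorOpen C) : w.rev.InteriorOpen C := by
  intro q hq
  rw [rev_n] at hq
  simp only [rev_node, rev_edge]
  rw [show w.n - 1 - q = w.n - 2 - q + 1 by omega, show w.n - 1 - (q + 1) = w.n - 2 - q by omega,
    show w.n - q = w.n - 2 - q + 2 by omega, show w.n - (q + 1) = w.n - 2 - q + 1 by omega,
    show w.n - (q + 2) = w.n - 2 - q by omega]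
  exact (hw (w.n - 2 - q) (by omega)).flip

lemma InteriorOpen.take (hw : w.InteriorOpen C) {i : ℕ} (hi : i ≤ w.n) :
    (w.take i hi).InteriorOpen C :=
  fun q hq => hw q (lt_of_lt_of_le hq hi)

lemma InteriorOpen.drop (hw : w.InteriorOpen C) {i : ℕ} (hi : i ≤ w.n) :
    (w.drop i hi).InteriorOpen C :=
  fun q hq => hw (i + q) (by simp at hq; omega)

lemma InteriorOpen.mono (hw : w.InteriorOpen C) (hC : C' ⊆ C)
    (hcol : ∀ i, i + 1 < w.n → IsCollider (w.edge i) (w.edge (i + 1)) →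
      w.node (i + 1) ∈ G.ancSet C') :
    w.InteriorOpen C' :=
  fun i hi => (hw i hi).mono hC (hcol i hi)

lemma InteriorOpen.append {h} (hw : w.InteriorOpen C) (hw' : w'.InteriorOpen C)
    (hjoin : 0 < w.n → 0 < w'.n → G.OpenTriple C (w.node (w.n - 1)) (w.edge (w.n - 1))
      (w'.node 0) (w'.edge 0) (w'.node 1)) :
    (w.append w' h).InteriorOpen C := by
  intro q hq
  simp only [append_n] at hq
  rcases lt_trichotomy (q + 1) w.n with hq₁ | hq₁ | hq₁
  · rw [append_node_of_le (by omega), append_node_of_le (by omega), append_node_of_le hq₁,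
      append_edge_of_lt (by omega), append_edge_of_lt hq₁]
    exact hw q hq₁
  · rw [append_node_of_le (by omega), append_node_of_ge hq₁.ge, append_node_of_ge (by omega),
      append_edge_of_lt (by omega), append_edge_of_ge hq₁.ge,
      show q + 1 - w.n = 0 by omega, show q + 2 - w.n = 1 by omega, show q = w.n - 1 by omega]
    exact hjoin (by omega) (by omega)
  · rw [append_node_of_ge (by omega), append_node_of_ge (by omega), append_node_of_ge (by omega),
      append_edge_of_ge (by omega), append_edge_of_ge (by omega),
      show q + 1 - w.n = q - w.n + 1 by omega, show q + 2 - w.n = q - w.n + 2 by omega]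
    exact hw' (q - w.n) (by omega)

end Basic

section Shortcut

variable {w : NatWalk G} {C : Set α}

/-- The first collider after position `i` is a descendant of `w.node i`. -/
lemma InteriorOpen.node_mem_ancSet_of_edge_fwd_of_edge_bwd (hw : w.InteriorOpen C) {i j : ℕ}
    (hij : i < j) (hj : j < w.n) (hi : w.edge i = .fwd) (hj' : w.edge j = .bwd) :
    w.node i ∈ G.ancSet C := by
  have hstep : ∀ {i}, i < w.n → w.edge i = .fwd → w.node (i + 1) ∈ G.ancSet C →
      w.node i ∈ G.ancSet C := fun hi he =>
    mem_ancSet_of_anc (.single (by simpa [he, StepValid] using w.valid _ hi))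
  obtain ⟨k, rfl⟩ : ∃ k, j = i + 1 + k := ⟨j - i - 1, by omega⟩
  clear hij
  induction k generalizing i with
  | zero => exact hstep (by omega) hi ((hw i (by omega)).1 ⟨Or.inl hi, Or.inl hj'⟩)
  | succ k ih =>
    refine hstep (by omega) hi ?_
    by_cases hcol : (w.edge (i + 1)).headAtLeft
    · exact (hw i (by omega)).1 ⟨Or.inl hi, hcol⟩
    · exact ih (eq_fwd_of_not_headAtLeft hcol) (by omega)
        (by rwa [show i + 1 + 1 + k = i + 1 + (k + 1) by omega])

/-- A collider at the junction is a collider of `w` at `i` or at `j`, unless `w` leaves the node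
forwards at `i` and reaches it backwards at `j`; then the lemma above applies. -/
lemma InteriorOpen.openTriple_splice (hw : w.InteriorOpen C) {i j : ℕ} (hi : 0 < i) (hij : i < j)
    (hj : j < w.n) (hv : w.node i = w.node j) :
    G.OpenTriple C (w.node (i - 1)) (w.edge (i - 1)) (w.node j) (w.edge j) (w.node (j + 1)) := by
  have hleft := hw (i - 1) (by omega)
  have hright := hw (j - 1) (by omega)
  rw [Nat.sub_add_cancel hi, show i - 1 + 2 = i + 1 by omega] at hleft
  rw [Nat.sub_add_cancel (by omega : 1 ≤ j), show j - 1 + 2 = j + 1 by omega] at hright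
  refine ⟨fun hcol => ?_, fun hnc hb => ⟨fun he => ?_, fun he => ?_⟩⟩
  · by_cases hi' : (w.edge i).headAtLeft
    · exact hv ▸ hleft.1 ⟨hcol.1, hi'⟩
    by_cases hj' : (w.edge (j - 1)).headAtRight
    · exact hright.1 ⟨hj', hcol.2⟩
    have hfwd := eq_fwd_of_not_headAtLeft hi'
    have hbwd := eq_bwd_of_not_headAtRight hj'
    have hij' : i < j - 1 := by
      rcases Nat.lt_or_ge i (j - 1) with h | h
      · exact h
      · rw [show j - 1 = i by omega, hfwd] at hbwd
        cases hbwd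
    exact hv ▸ hw.node_mem_ancSet_of_edge_fwd_of_edge_bwd hij' (by omega) hfwd hbwd
  · exact hv ▸ (hleft.2 (he ▸ not_isCollider_bwd_left _) (hv ▸ hb)).1 he
  · exact (hright.2 (he ▸ not_isCollider_fwd_right _) hb).2 he

lemma InteriorOpen.exists_shorter (hw : w.InteriorOpen C) {i j : ℕ} (hij : i < j) (hj : j ≤ w.n)
    (hv : w.node i = w.node j) :
    ∃ w' : NatWalk G, w'.n < w.n ∧ w'.node 0 = w.node 0 ∧ w'.node w'.n = w.node w.n ∧
      w'.InteriorOpen C := by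
  refine ⟨(w.take i (by omega)).append (w.drop j hj) (by simpa using hv), by simp; omega,
    append_node_of_le (Nat.zero_le _), ?_, ?_⟩
  · rw [append_node_of_ge (by simp)]
    simp [hj]
  · refine (hw.take _).append (hw.drop _) fun hi hj' => ?_
    simpa using hw.openTriple_splice hi hij (by simp at hj'; omega) hv

lemma InteriorOpen.exists_injOn (hw : w.InteriorOpen C) :
    ∃ w' : NatWalk G, w'.node 0 = w.node 0 ∧ w'.node w'.n = w.node w.n ∧ w'.InteriorOpen C ∧
      Set.InjOn w'.node (Set.Iic w'.n) := by
  obtain ⟨n, hn⟩ : ∃ n, w.n = n := ⟨_, rfl⟩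
  induction n using Nat.strong_induction_on generalizing w with
  | _ n ih =>
    by_cases hinj : Set.InjOn w.node (Set.Iic w.n)
    · exact ⟨w, rfl, rfl, hw, hinj⟩
    obtain ⟨i, j, hij, hj, hv⟩ : ∃ i j, i < j ∧ j ≤ w.n ∧ w.node i = w.node j := by
      simp only [Set.InjOn, Set.mem_Iic, not_forall] at hinj
      obtain ⟨a, ha, b, hb, hab, hne⟩ := hinj
      rcases Nat.lt_or_gt_of_ne hne with h | h
      · exact ⟨a, b, h, hb, hab⟩
      · exact ⟨b, a, h, ha, hab.symm⟩
    obtain ⟨w', hlt, h0, hn', hw'⟩ := hw.exists_shorter hij hj hv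
    obtain ⟨w'', h0', hn'', hw'', hinj''⟩ := ih w'.n (hn ▸ hlt) hw' rfl
    exact ⟨w'', h0'.trans h0, hn''.trans hn', hw'', hinj''⟩

end Shortcut

end NatWalk

lemma Walk.not_blocked_iff {x y : α} {w : G.Walk x y} {C : Set α} :
    ¬ w.Blocked C ↔ x ∉ C ∧ y ∉ C ∧ ∀ i (h : i + 1 < w.n),
      G.OpenTriple C (w.node ⟨i, by omega⟩) (w.edge ⟨i, by omega⟩) (w.node ⟨i + 1, by omega⟩)
        (w.edge ⟨i + 1, h⟩) (w.node ⟨i + 2, by omega⟩) := by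
  simp only [Walk.Blocked, OpenTriple, IsCollider, Walk.IsColliderAt, not_or, not_exists, not_and,
    not_not, forall_and]

namespace NatWalk

variable {x y : α}

def ofWalk (w : G.Walk x y) : NatWalk G where
  n := w.n
  node k := if h : k ≤ w.n then w.node ⟨k, by omega⟩ else y
  edge k := if h : k < w.n then w.edge ⟨k, h⟩ else .fwd
  valid k hk := by
    simp only [dif_pos hk.le, dif_pos hk, dif_pos (show k + 1 ≤ w.n from hk)]
    exact w.valid ⟨k, hk⟩

@[simp] lemma ofWalk_n (w : G.Walk x y) : (ofWalk w).n = w.n := rfl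

lemma ofWalk_node (w : G.Walk x y) {k : ℕ} (hk : k ≤ w.n) :
    (ofWalk w).node k = w.node ⟨k, by omega⟩ :=
  dif_pos hk

lemma ofWalk_edge (w : G.Walk x y) {k : ℕ} (hk : k < w.n) :
    (ofWalk w).edge k = w.edge ⟨k, hk⟩ :=
  dif_pos hk

def toWalk (w : NatWalk G) (hx : w.node 0 = x) (hy : w.node w.n = y) : G.Walk x y where
  n := w.n
  node i := w.node i
  edge i := w.edge i
  first_eq := hx
  last_eq := hy
  valid i := w.valid i i.isLt

end NatWalk

open NatWalk in
/-- σ-connection by a path is σ-connection by a walk. -/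
lemma not_sigmaSep_iff {x y : α} {C : Set α} :
    ¬ G.sigmaSep x y C ↔ x ∉ C ∧ y ∉ C ∧
      ∃ w : NatWalk G, w.node 0 = x ∧ w.node w.n = y ∧ w.InteriorOpen C := by
  constructor
  · intro h
    obtain ⟨w, -, hw⟩ : ∃ w : G.Walk x y, w.IsPath ∧ ¬ w.Blocked C := by
      simpa [sigmaSep] using h
    obtain ⟨hx, hy, hopen⟩ := Walk.not_blocked_iff.1 hw
    refine ⟨hx, hy, ofWalk w, ?_, ?_, fun i hi => ?_⟩
    · rw [ofWalk_node w (Nat.zero_le _)]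
      exact w.first_eq
    · exact (ofWalk_node w le_rfl).trans w.last_eq
    · rw [ofWalk_n] at hi
      rw [ofWalk_node w (by omega), ofWalk_node w (by omega), ofWalk_node w (by omega),
        ofWalk_edge w (by omega), ofWalk_edge w hi]
      exact hopen i hi
  · rintro ⟨hx, hy, w, h0, hn, hw⟩ hsep
    obtain ⟨w', h0', hn', hw', hinj⟩ := hw.exists_injOn
    refine Walk.not_blocked_iff.2 ⟨hx, hy, fun i hi => hw' i hi⟩
      (hsep (w'.toWalk (h0'.trans h0) (hn'.trans hn)) fun a b hab => Fin.ext ?_)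
    exact hinj (Nat.lt_succ_iff.1 a.isLt) (Nat.lt_succ_iff.1 b.isLt) hab

namespace NatWalk

lemma exists_bwd_of_anc {v a : α} (h : G.Anc v a) :
    ∃ δ : NatWalk G, δ.node 0 = a ∧ δ.node δ.n = v ∧ (∀ k, δ.edge k = .bwd) ∧
      ∀ k ≤ δ.n, G.Anc v (δ.node k) := by
  induction h using Relation.ReflTransGen.head_induction_on with
  | refl => exact ⟨⟨0, fun _ => a, fun _ => .bwd, fun _ h => absurd h (Nat.not_lt_zero _)⟩,
      rfl, rfl, fun _ => rfl, fun _ _ => .refl⟩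
  | @head v v' hvv' _ ih =>
    obtain ⟨δ, h0, hn, hbwd, hanc⟩ := ih
    refine ⟨⟨δ.n + 1, fun k => if k ≤ δ.n then δ.node k else v, fun _ => .bwd, fun k hk => ?_⟩,
      by simp [h0], by simp, fun _ => rfl, fun k hk => ?_⟩
    · by_cases hk' : k < δ.n
      · simpa [hk'.le, Nat.succ_le_of_lt hk', ← hbwd k] using δ.valid k hk'
      · simpa [show k = δ.n by omega, hn, StepValid] using hvv'
    · by_cases hk' : k ≤ δ.n
      · simp only [hk', if_true]
        exact .head hvv' (hanc k hk')
      · simp only [hk', if_false]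
        exact .refl

section Graft

variable {π : NatWalk G} {C C' : Set α}

/-- Replace the part of `π` before the node at position `c` by a directed path from that node to
the start of `π`, traversed backwards. -/
lemma InteriorOpen.graft (hπ : π.InteriorOpen C) (hC : C' ⊆ C) {c : ℕ} (hc : c < π.n)
    (hv : π.node c ∉ G.ancSet C') (hanc : G.Anc (π.node c) (π.node 0))
    (hlater : ∀ p, c ≤ p → p + 1 < π.n → IsCollider (π.edge p) (π.edge (p + 1)) →
      π.node (p + 1) ∈ G.ancSet C') :
    ∃ ω : NatWalk G, ω.node 0 = π.node 0 ∧ ω.node ω.n = π.node π.n ∧ ω.InteriorOpen C' := by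
  obtain ⟨δ, h0, hn, hbwd, hδanc⟩ := exists_bwd_of_anc hanc
  have hδ : ∀ k ≤ δ.n, δ.node k ∉ C' := fun k hk hk' => hv ⟨_, hk', hδanc k hk⟩
  refine ⟨δ.append (π.drop c hc.le) (by simpa using hn),
    by rw [append_node_of_le (Nat.zero_le _), h0], ?_, ?_⟩
  · rw [append_n, append_node_of_ge (by omega)]
    simp [hc.le]
  refine InteriorOpen.append (fun i hi => ?_) ((hπ.drop hc.le).mono hC fun i hi hcol => ?_)
    fun _ _ => ?_
  · exact openTriple_of_not_isCollider (hbwd i ▸ not_isCollider_bwd_left _) (hδ _ (by omega))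
  · exact hlater (c + i) (by omega) (by simp at hi; omega) hcol
  · rw [hbwd]
    exact openTriple_of_not_isCollider (not_isCollider_bwd_left _) fun h => hv ⟨_, h, .refl⟩

lemma InteriorOpen.exists_of_colliders_anc_start (hπ : π.InteriorOpen C) (hC : C' ⊆ C)
    (hcol : ∀ i, i + 1 < π.n → IsCollider (π.edge i) (π.edge (i + 1)) →
      π.node (i + 1) ∉ G.ancSet C' → G.Anc (π.node (i + 1)) (π.node 0)) :
    ∃ ω : NatWalk G, ω.node 0 = π.node 0 ∧ ω.node ω.n = π.node π.n ∧ ω.InteriorOpen C' := by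
  classical
  let Bad i := i + 1 < π.n ∧ IsCollider (π.edge i) (π.edge (i + 1)) ∧ π.node (i + 1) ∉ G.ancSet C'
  by_cases hbad : ∃ i, Bad i
  · obtain ⟨i, hi⟩ := hbad
    obtain ⟨hlt, hcoll, hv⟩ : Bad (Nat.findGreatest Bad π.n) :=
      Nat.findGreatest_spec (by omega : i ≤ π.n) hi
    refine hπ.graft hC hlt hv (hcol _ hlt hcoll hv) fun p hp hpn hpcol => ?_
    by_contra hp'
    exact Nat.findGreatest_is_greatest (P := Bad) (n := π.n) (by omega) (by omega)
      ⟨hpn, hpcol, hp'⟩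
  · simp only [not_exists] at hbad
    exact ⟨π, rfl, rfl, hπ.mono hC fun i hi hc => not_not.1 fun hv => hbad i ⟨hi, hc, hv⟩⟩

lemma InteriorOpen.exists_of_insert {z : α} (hπ : π.InteriorOpen (insert z C))
    (hz : z ∈ G.ancSet ({π.node 0, π.node π.n} ∪ C)) :
    ∃ ω : NatWalk G, ω.node 0 = π.node 0 ∧ ω.node ω.n = π.node π.n ∧ ω.InteriorOpen C := by
  have hsub : C ⊆ insert z C := Set.subset_insert z C
  obtain ⟨u, (rfl | rfl) | hu, hzu⟩ := hz
  · exact hπ.exists_of_colliders_anc_start hsub fun i hi hc hv =>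
      (anc_of_mem_ancSet_insert ((hπ i hi).1 hc) hv).trans hzu
  · obtain ⟨ω, h0, hn, hω⟩ := hπ.rev.exists_of_colliders_anc_start hsub fun i hi hc hv =>
      (anc_of_mem_ancSet_insert ((hπ.rev i hi).1 hc) hv).trans (by rwa [rev_node, Nat.sub_zero])
    exact ⟨ω.rev, by simpa using hn, by simpa using h0, hω.rev⟩
  · refine ⟨π, rfl, rfl, hπ.mono hsub fun i hi hc => ?_⟩
    by_contra hv
    exact hv (mem_ancSet_of_anc (anc_of_mem_ancSet_insert ((hπ i hi).1 hc) hv) ⟨u, hu, hzu⟩)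

end Graft

end NatWalk

end DMG

theorem minimal_sigma_connection_implies_nonancestors_general
    {α : Type*} (G : DMG α) (X Y : α) (W Z : Set α)
    (hcon : ¬ G.sigmaSep X Y (W ∪ Z))
    (hmin : ∀ Z' ⊂ Z, G.sigmaSep X Y (W ∪ Z')) :
    Z ∩ G.ancSet ({X, Y} ∪ W) = ∅ := by
  refine Set.eq_empty_iff_forall_notMem.2 fun z ⟨hzZ, hz⟩ => ?_
  have hC : W ∪ Z = insert z (W ∪ (Z \ {z})) :=
    Set.ext fun v => by by_cases hv : v = z <;> simp [hv, hzZ]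
  rw [hC, DMG.not_sigmaSep_iff] at hcon
  obtain ⟨hX, hY, π, rfl, rfl, hπ⟩ := hcon
  obtain ⟨ω, h0, hn, hω⟩ := hπ.exists_of_insert
    (DMG.ancSet_mono (Set.union_subset_union_right _ Set.subset_union_left) hz)
  exact DMG.not_sigmaSep_iff.2 ⟨fun h => hX (Or.inr h), fun h => hY (Or.inr h), ω, h0, hn, hω⟩
    (hmin _ (Set.sdiff_singleton_ssubset.2 hzZ))

/-- a minimal σ-connection `X ⊥̸ Y | W ∪ [Z]` implies
`Z ∩ an({X, Y} ∪ W) = ∅`. -/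
theorem minimal_sigma_connection_implies_nonancestors
    {α : Type*} [Fintype α] (G : DMG α) (X Y : α) (W Z : Set α)
    (hXY : X ≠ Y) (hXW : X ∉ W) (hXZ : X ∉ Z) (hYW : Y ∉ W) (hYZ : Y ∉ Z)
    (hWZ : Disjoint W Z)
    (hcon : ¬ G.sigmaSep X Y (W ∪ Z))
    (hmin : ∀ Z' ⊂ Z, G.sigmaSep X Y (W ∪ Z')) :
    Z ∩ G.ancSet ({X, Y} ∪ W) = ∅ :=
  minimal_sigma_connection_implies_nonancestors_general G X Y W Z hcon hmin
end

section
/- (LCD, graphical form.) Let G be a directed mixed graph and let C, X, Y be three distinct nodes of G such that no node other than C is an ancestor of C, i.e., an(C) = {C}. If C ⊥ Y | {X} and C ⊥̸ Y | ∅ hold in G, then X ∈ an(Y), Y ∉ an(X), and X and Y are unconfounded in G. -/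
section LCDAux

namespace DMG

variable {α : Type*} {G : DMG α}

lemma anc_segment {x y : α} (p : Walk G x y) (a : ℕ) (ha : a ≤ p.n)
    (hfwd : ∀ i (h : i < p.n), a ≤ i → p.edge ⟨i, h⟩ = .fwd) :
    ∀ b, a ≤ b → ∀ hb : b ≤ p.n,
      G.Anc (p.node ⟨a, by omega⟩) (p.node ⟨b, by omega⟩) := by
  intro b
  induction b with
  | zero =>
    intro hab hb
    have haz : a = 0 := by omega
    subst haz
    exact Relation.ReflTransGen.refl
  | succ b ih =>
    intro hab hb
    rcases Nat.lt_or_ge a (b + 1) with h1 | h1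
    · have hab' : a ≤ b := by omega
      have hbn : b < p.n := by omega
      have hv := p.valid ⟨b, hbn⟩
      rw [hfwd b hbn hab'] at hv
      exact Relation.ReflTransGen.tail (ih hab' (by omega)) hv
    · have : a = b + 1 := by omega
      subst this
      exact Relation.ReflTransGen.refl

lemma root_path_struct {C Y : α} (hCY : C ≠ Y) (hroot : ∀ v, G.Anc v C → v = C)
    (p : Walk G C Y) (hp : p.IsPath) (hnb : ¬ p.Blocked ∅) :
    0 < p.n ∧
      (∀ i (h : i < p.n), (p.edge ⟨i, h⟩).headAtRight ∧ (1 ≤ i → p.edge ⟨i, h⟩ = .fwd)) ∧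
      ∀ i (h : i + 1 < p.n), ¬ p.IsColliderAt i h := by
  have hn : 0 < p.n := by
    by_contra h
    have h0 : p.n = 0 := by omega
    apply hCY
    rw [← p.first_eq, show (0 : Fin (p.n + 1)) = Fin.last p.n from Fin.ext (by simp [h0])]
    exact p.last_eq
  have hnc : ∀ i (h : i + 1 < p.n), ¬ p.IsColliderAt i h := by
    intro i h hcol
    apply hnb
    refine Or.inr (Or.inr (Or.inl ⟨i, h, hcol, ?_⟩))
    rintro ⟨y, hy, -⟩
    exact absurd hy (Set.notMem_empty y)
  have he0 : p.edge ⟨0, hn⟩ ≠ .bwd := by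
    intro hb
    have hv := p.valid ⟨0, hn⟩
    rw [hb] at hv
    have h0 : p.node ⟨0, by omega⟩ = C := p.first_eq
    have h1 : p.node ⟨1, by omega⟩ = C := by
      apply hroot
      have hstep : G.Anc (p.node ⟨1, by omega⟩) (p.node ⟨0, by omega⟩) :=
        Relation.ReflTransGen.single hv
      rwa [h0] at hstep
    have h2 : (⟨1, by omega⟩ : Fin (p.n + 1)) = ⟨0, by omega⟩ := hp (h1.trans h0.symm)
    have := congrArg Fin.val h2
    simp at this
  have hhead : ∀ i (h : i < p.n),
      (p.edge ⟨i, h⟩).headAtRight ∧ (1 ≤ i → p.edge ⟨i, h⟩ = .fwd) := by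
    intro i
    induction i with
    | zero =>
      intro h
      refine ⟨?_, by omega⟩
      cases he : p.edge ⟨0, h⟩ with
      | fwd => exact Or.inl rfl
      | bwd => exact absurd he he0
      | bi => exact Or.inr rfl
    | succ i ih =>
      intro h
      have hiR := (ih (by omega)).1
      have hnotL : ¬ (p.edge ⟨i + 1, h⟩).headAtLeft := fun hl => hnc i h ⟨hiR, hl⟩
      have hf : p.edge ⟨i + 1, h⟩ = .fwd := by
        cases he : p.edge ⟨i + 1, h⟩ with
        | fwd => rfl
        | bwd => exact absurd (by rw [he]; exact Or.inl rfl) hnotL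
        | bi => exact absurd (by rw [he]; exact Or.inr rfl) hnotL
      exact ⟨by rw [hf]; exact Or.inl rfl, fun _ => hf⟩
  exact ⟨hn, hhead, hnc⟩

end DMG

end LCDAux
section LCDAux2

namespace DMG

variable {α : Type*} {G : DMG α}

set_option maxHeartbeats 16000000 in
lemma composite_conn {C X Y : α} (hCX : C ≠ X) (hXY : X ≠ Y)
    (p : Walk G C Y) (hp : p.IsPath)
    (hhead : ∀ i (h : i < p.n), (p.edge ⟨i, h⟩).headAtRight ∧ (1 ≤ i → p.edge ⟨i, h⟩ = .fwd))
    (k : ℕ) (hk1 : 1 ≤ k) (hkn : k < p.n) (hkX : p.node ⟨k, by omega⟩ = X)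
    (q : Walk G X Y) (hq : IsConfoundingPath q) :
    ∃ w : Walk G C Y, w.IsPath ∧ ¬ w.Blocked {X} := by
  classical
  obtain ⟨hqp, hq0, hqL, hqR, hqnc⟩ := hq
  -- congruence helpers
  have pn : ∀ (a b : ℕ) (hab : a = b) (ha : a < p.n + 1) (hb : b < p.n + 1),
      p.node ⟨a, ha⟩ = p.node ⟨b, hb⟩ := fun a b hab ha hb => by subst hab; rfl
  have qn : ∀ (a b : ℕ) (hab : a = b) (ha : a < q.n + 1) (hb : b < q.n + 1),
      q.node ⟨a, ha⟩ = q.node ⟨b, hb⟩ := fun a b hab ha hb => by subst hab; rfl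
  have qe : ∀ (a b : ℕ) (hab : a = b) (ha : a < q.n) (hb : b < q.n),
      q.edge ⟨a, ha⟩ = q.edge ⟨b, hb⟩ := fun a b hab ha hb => by subst hab; rfl
  -- least index of p (up to k) whose node lies on q
  have hex : ∃ t, t ≤ k ∧ ∃ s : Fin (q.n + 1), p.node ⟨min t k, by omega⟩ = q.node s :=
    ⟨k, le_refl k, 0, by
      rw [pn (min k k) k (Nat.min_self k) (by omega) (by omega)]
      exact hkX.trans q.first_eq.symm⟩
  obtain ⟨i, ⟨hik, s0, hs0⟩, hminP⟩ :
      ∃ i, (i ≤ k ∧ ∃ s : Fin (q.n + 1), p.node ⟨min i k, by omega⟩ = q.node s) ∧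
        ∀ t, t < i → ¬ (t ≤ k ∧ ∃ s : Fin (q.n + 1), p.node ⟨min t k, by omega⟩ = q.node s) :=
    ⟨Nat.find hex, Nat.find_spec hex, fun t ht => Nat.find_min hex ht⟩
  have hs0' : p.node ⟨i, by omega⟩ = q.node s0 := by
    rw [pn i (min i k) (by omega) (by omega) (by omega)]
    exact hs0
  have hmin' : ∀ t (ht : t < i) (s : Fin (q.n + 1)), p.node ⟨t, by omega⟩ ≠ q.node s := by
    intro t ht s hEq
    refine hminP t ht ⟨by omega, s, ?_⟩
    rw [pn (min t k) t (by omega) (by omega) (by omega)]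
    exact hEq
  have hjq' : (s0 : ℕ) < q.n + 1 := s0.isLt
  set j := (s0 : ℕ) with hjdef
  have hjq : j < q.n := by
    by_contra hge
    have hlast : s0 = Fin.last q.n := by
      apply Fin.ext
      simp only [Fin.val_last]
      omega
    rw [hlast, q.last_eq] at hs0'
    have hYp : p.node ⟨p.n, by omega⟩ = Y := p.last_eq
    have h2 := congrArg Fin.val (hp (hs0'.trans hYp.symm))
    simp only at h2
    omega
  have hs0'' : p.node ⟨i, by omega⟩ = q.node ⟨j, by omega⟩ := hs0'
  set N := i + (q.n - j) with hNdef
  have hiN : i < N := by omega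
  -- the composite node and edge functions, made opaque
  obtain ⟨nodeF, hnodeF⟩ : ∃ f : Fin (N + 1) → α, f = fun t : Fin (N + 1) =>
      if t.1 ≤ i then p.node ⟨min t.1 p.n, by omega⟩
      else q.node ⟨min (j + (t.1 - i)) q.n, by omega⟩ := ⟨_, rfl⟩
  obtain ⟨edgeF, hedgeF⟩ : ∃ f : Fin N → EdgeDir, f = fun t : Fin N =>
      if t.1 < i then p.edge ⟨min t.1 (p.n - 1), by omega⟩
      else q.edge ⟨min (j + (t.1 - i)) (q.n - 1), by omega⟩ := ⟨_, rfl⟩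
  have hnodeP : ∀ (t : ℕ) (h1 : t ≤ i) (hb : t < N + 1),
      nodeF ⟨t, hb⟩ = p.node ⟨t, by omega⟩ := by
    intro t h1 hb
    rw [hnodeF]
    dsimp only
    rw [if_pos h1]
    exact pn (min t p.n) t (by omega) (by omega) (by omega)
  have hnodeQ : ∀ (t : ℕ) (h1 : i < t) (hb : t < N + 1),
      nodeF ⟨t, hb⟩ = q.node ⟨j + (t - i), by omega⟩ := by
    intro t h1 hb
    rw [hnodeF]
    dsimp only
    rw [if_neg (by omega)]
    exact qn (min (j + (t - i)) q.n) (j + (t - i)) (by omega) (by omega) (by omega)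
  have hedgeP : ∀ (t : ℕ) (h1 : t < i) (hb : t < N),
      edgeF ⟨t, hb⟩ = p.edge ⟨t, by omega⟩ := by
    intro t h1 hb
    rw [hedgeF]
    dsimp only
    rw [if_pos h1]
    have : min t (p.n - 1) = t := by omega
    exact congrArg p.edge (Fin.ext this)
  have hedgeQ : ∀ (t : ℕ) (h1 : i ≤ t) (hb : t < N),
      edgeF ⟨t, hb⟩ = q.edge ⟨j + (t - i), by omega⟩ := by
    intro t h1 hb
    rw [hedgeF]
    dsimp only
    rw [if_neg (by omega)]
    exact qe (min (j + (t - i)) (q.n - 1)) (j + (t - i)) (by omega) (by omega) (by omega)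
  -- the structure fields
  have hfirst : nodeF 0 = C :=
    (hnodeP 0 (Nat.zero_le i) (by omega)).trans p.first_eq
  have hlast : nodeF (Fin.last N) = Y := by
    have h1 := hnodeQ N hiN (by omega)
    have h2 := qn (j + (N - i)) q.n (by omega) (by omega) (by omega)
    exact h1.trans (h2.trans q.last_eq)
  have hvalid : ∀ t : Fin N,
      G.StepValid (nodeF t.castSucc) (edgeF t) (nodeF t.succ) := by
    rintro ⟨tv, htv⟩
    show G.StepValid (nodeF ⟨tv, by omega⟩) (edgeF ⟨tv, by omega⟩) (nodeF ⟨tv + 1, by omega⟩)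
    rcases Nat.lt_or_ge (tv + 1) (i + 1) with h1 | h1
    · rw [hnodeP tv (by omega) (by omega), hnodeP (tv + 1) (by omega) (by omega),
        hedgeP tv (by omega) (by omega)]
      exact p.valid ⟨tv, by omega⟩
    rcases Nat.eq_or_lt_of_le h1 with h2 | h2
    · -- tv = i : boundary step
      rw [hnodeP tv (by omega) (by omega), hnodeQ (tv + 1) (by omega) (by omega),
        hedgeQ tv (by omega) (by omega)]
      rw [pn tv i (by omega) (by omega) (by omega), hs0'',
        qe (j + (tv - i)) j (by omega) (by omega) (by omega),
        qn (j + (tv + 1 - i)) (j + 1) (by omega) (by omega) (by omega)]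
      exact q.valid ⟨j, hjq⟩
    · -- tv > i
      rw [hnodeQ tv (by omega) (by omega), hnodeQ (tv + 1) (by omega) (by omega),
        hedgeQ tv (by omega) (by omega)]
      rw [qn (j + (tv + 1 - i)) (j + (tv - i) + 1) (by omega) (by omega) (by omega)]
      exact q.valid ⟨j + (tv - i), by omega⟩
  refine ⟨⟨N, nodeF, edgeF, hfirst, hlast, hvalid⟩, ?_, ?_⟩
  · -- IsPath
    show Function.Injective nodeF
    rintro ⟨av, hav⟩ ⟨bv, hbv⟩ hab
    show (⟨av, hav⟩ : Fin (N + 1)) = ⟨bv, hbv⟩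
    by_cases ha : av ≤ i <;> by_cases hb : bv ≤ i
    · rw [hnodeP av ha hav, hnodeP bv hb hbv] at hab
      have := congrArg Fin.val (hp hab)
      simp only at this
      exact Fin.ext this
    · exfalso
      rw [hnodeP av ha hav, hnodeQ bv (by omega) hbv] at hab
      rcases Nat.lt_or_ge av i with hlt | hge
      · exact hmin' av hlt _ hab
      · rw [pn av i (by omega) (by omega) (by omega), hs0''] at hab
        have := congrArg Fin.val (hqp hab)
        simp only at this
        omega
    · exfalso
      rw [hnodeQ av (by omega) hav, hnodeP bv hb hbv] at hab
      rcases Nat.lt_or_ge bv i with hlt | hge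
      · exact hmin' bv hlt _ hab.symm
      · rw [pn bv i (by omega) (by omega) (by omega), hs0''] at hab
        have := congrArg Fin.val (hqp hab.symm)
        simp only at this
        omega
    · rw [hnodeQ av (by omega) hav, hnodeQ bv (by omega) hbv] at hab
      have := congrArg Fin.val (hqp hab)
      simp only at this
      exact Fin.ext (show av = bv by omega)
  · -- not Blocked
    intro hb
    have hb' : C ∈ ({X} : Set α) ∨ Y ∈ ({X} : Set α) ∨
        (∃ (t : ℕ) (h : t + 1 < N),
          ((edgeF ⟨t, by omega⟩).headAtRight ∧ (edgeF ⟨t + 1, h⟩).headAtLeft) ∧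
            nodeF ⟨t + 1, by omega⟩ ∉ G.ancSet {X}) ∨
        (∃ (t : ℕ) (h : t + 1 < N),
          ¬ ((edgeF ⟨t, by omega⟩).headAtRight ∧ (edgeF ⟨t + 1, h⟩).headAtLeft) ∧
            nodeF ⟨t + 1, by omega⟩ ∈ ({X} : Set α) ∧
            ((edgeF ⟨t, by omega⟩ = .bwd ∧
                nodeF ⟨t, by omega⟩ ∉ G.scc (nodeF ⟨t + 1, by omega⟩)) ∨
             (edgeF ⟨t + 1, h⟩ = .fwd ∧
                nodeF ⟨t + 2, by omega⟩ ∉ G.scc (nodeF ⟨t + 1, by omega⟩)))) := hb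
    clear hb
    rcases hb' with hC | hY | ⟨t, ht, ⟨hcl, hcr⟩, hnanc⟩ | ⟨t, ht, hncol, hmem, hor⟩
    · exact hCX hC
    · exact hXY hY.symm
    · -- collider clause
      rcases Nat.lt_or_ge (t + 1) i with h1 | h1
      · -- strictly inside the p-part: edge t+1 is fwd, no head at left
        rw [hedgeP (t + 1) h1 (by omega)] at hcr
        rw [(hhead (t + 1) (by omega)).2 (by omega)] at hcr
        simp [EdgeDir.headAtLeft] at hcr
      rcases Nat.eq_or_lt_of_le h1 with h2 | h2
      · -- t + 1 = i : junction collider is an ancestor of X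
        apply hnanc
        rw [hnodeP (t + 1) (by omega) (by omega)]
        refine ⟨X, rfl, ?_⟩
        have hanc := anc_segment p (t + 1) (by omega)
          (fun idx hidx hge => (hhead idx hidx).2 (by omega)) k (by omega) (by omega)
        rw [hkX] at hanc
        exact hanc
      · -- strictly inside the q-part: collider of q, contradiction
        rw [hedgeQ t (by omega) (by omega)] at hcl
        rw [hedgeQ (t + 1) (by omega) (by omega)] at hcr
        rw [qe (j + (t + 1 - i)) (j + (t - i) + 1) (by omega) (by omega) (by omega)] at hcr
        exact hqnc (j + (t - i)) (by omega) ⟨hcl, hcr⟩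
    · -- non-collider clause
      rw [Set.mem_singleton_iff] at hmem
      rcases Nat.lt_or_ge (t + 1) i with h1 | h1
      · rw [hnodeP (t + 1) (by omega) (by omega)] at hmem
        exact hmin' (t + 1) h1 0 (hmem.trans q.first_eq.symm)
      rcases Nat.eq_or_lt_of_le h1 with h2 | h2
      · -- t + 1 = i : then j = 0 and the junction is a collider
        rw [hnodeP (t + 1) (by omega) (by omega)] at hmem
        have hXi : q.node ⟨j, by omega⟩ = q.node 0 := by
          rw [← hs0'', pn i (t + 1) (by omega) (by omega) (by omega), hmem, q.first_eq]
        have hj0 : j = 0 := by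
          have := congrArg Fin.val (hqp hXi)
          simpa using this
        apply hncol
        constructor
        · rw [hedgeP t (by omega) (by omega)]
          exact (hhead t (by omega)).1
        · rw [hedgeQ (t + 1) (by omega) (by omega)]
          rw [qe (j + (t + 1 - i)) 0 (by omega) (by omega) (by omega)]
          exact hqL
      · -- strictly inside the q-part: interior q node equals X, impossible
        rw [hnodeQ (t + 1) (by omega) (by omega)] at hmem
        have := congrArg Fin.val (hqp (hmem.trans q.first_eq.symm))
        simp only [Fin.val_zero] at this
        omega

end DMG

end LCDAux2
/-- LCD, graphical form: if no node other than `C` is an ancestor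
of `C`, `C ⊥ Y | {X}` and `C ⊥̸ Y | ∅`, then `X ∈ an(Y)`, `Y ∉ an(X)` and
`X` and `Y` are unconfounded. -/
theorem lcd_graphical
    {α : Type*} [Fintype α] (G : DMG α) (C X Y : α)
    (hCX : C ≠ X) (hCY : C ≠ Y) (hXY : X ≠ Y)
    (hroot : ∀ v, G.Anc v C → v = C)
    (hsep : G.sigmaSep C Y {X})
    (hdep : ¬ G.sigmaSep C Y ∅) :
    G.Anc X Y ∧ ¬ G.Anc Y X ∧ ¬ G.Confounded X Y := by
  classical
  unfold DMG.sigmaSep at hdep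
  push_neg at hdep
  obtain ⟨p, hp, hnb⟩ := hdep
  obtain ⟨hn, hhead, hnc⟩ := DMG.root_path_struct hCY hroot p hp hnb
  have hbl := hsep p hp
  rcases hbl with hC | hY | ⟨t, ht, hcol, -⟩ | ⟨t, ht, hncol, hmem, hor⟩
  · exact absurd hC hCX
  · exact absurd hY (Ne.symm hXY)
  · exact absurd hcol (hnc t ht)
  · rw [Set.mem_singleton_iff] at hmem
    rcases hor with ⟨hbwd, -⟩ | ⟨hfwd, hscc⟩
    · have hhr := (hhead t (by omega)).1
      rw [hbwd] at hhr
      simp [EdgeDir.headAtRight] at hhr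
    · have hfwdall : ∀ idx (h : idx < p.n), t + 1 ≤ idx → p.edge ⟨idx, h⟩ = .fwd :=
        fun idx h hge => (hhead idx h).2 (by omega)
      have hlastp : p.node ⟨p.n, by omega⟩ = Y := p.last_eq
      have hAncXY : G.Anc X Y := by
        have h1 := DMG.anc_segment p (t + 1) (by omega) hfwdall p.n (by omega) (le_refl _)
        rw [hmem, hlastp] at h1
        exact h1
      have hstep : G.dir X (p.node ⟨t + 2, by omega⟩) := by
        have hv := p.valid ⟨t + 1, ht⟩
        rw [hfwdall (t + 1) ht (le_refl _)] at hv
        have hv' : G.dir (p.node ⟨t + 1, by omega⟩) (p.node ⟨t + 2, by omega⟩) := hv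
        rwa [hmem] at hv'
      have hanc2 : G.Anc (p.node ⟨t + 2, by omega⟩) Y := by
        have h1 := DMG.anc_segment p (t + 2) (by omega)
          (fun idx h hge => (hhead idx h).2 (by omega)) p.n (by omega) (le_refl _)
        rwa [hlastp] at h1
      have hnYX : ¬ G.Anc Y X := by
        intro hYX
        apply hscc
        rw [hmem]
        exact ⟨hanc2.trans hYX, Relation.ReflTransGen.single hstep⟩
      refine ⟨hAncXY, hnYX, ?_⟩
      rintro ⟨q, hq⟩
      obtain ⟨w, hw, hwb⟩ := DMG.composite_conn hCX hXY p hp hhead (t + 1)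
        (by omega) (by omega) hmem q hq
      exact hwb (hsep w hw)
end

section
/- (LCD with the weaker background assumption.) Let G be a directed mixed graph and let C, X, Y be three distinct nodes of G such that X ∉ an(C). If C ⊥ Y | {X} and C ⊥̸ Y | ∅ hold in G, then X ∈ an(Y), Y ∉ an(X), and X and Y are unconfounded in G. -/
section Aux

theorem EdgeDir.eq_fwd_of_not_headAtLeft_s3 {e : EdgeDir} (h : ¬ e.headAtLeft) : e = .fwd := by
  cases e
  · rfl
  · exact absurd (Or.inl rfl) h
  · exact absurd (Or.inr rfl) h

theorem EdgeDir.eq_bwd_of_not_headAtRight_s3 {e : EdgeDir} (h : ¬ e.headAtRight) : e = .bwd := by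
  cases e
  · exact absurd (Or.inl rfl) h
  · rfl
  · exact absurd (Or.inr rfl) h

namespace DMG.Walk

variable {α : Type*} {G : DMG α} {x y : α}

/-- Convenient abbreviation: the walk has no colliders at all. -/
def NC (w : Walk G x y) : Prop := ∀ (i : ℕ) (hi : i + 1 < w.n), ¬ w.IsColliderAt i hi

theorem nc_fwd_succ {w : Walk G x y} (nc : w.NC) {m : ℕ} (hm : m + 1 < w.n)
    (h : (w.edge ⟨m, by omega⟩).headAtRight) : w.edge ⟨m + 1, hm⟩ = EdgeDir.fwd :=
  EdgeDir.eq_fwd_of_not_headAtLeft_s3 fun hl => nc m hm ⟨h, hl⟩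

theorem nc_bwd_pred {w : Walk G x y} (nc : w.NC) {m : ℕ} (hm : m + 1 < w.n)
    (h : (w.edge ⟨m + 1, hm⟩).headAtLeft) : w.edge ⟨m, by omega⟩ = EdgeDir.bwd :=
  EdgeDir.eq_bwd_of_not_headAtRight_s3 fun hr => nc m hm ⟨hr, h⟩

theorem nc_fwd_chain {w : Walk G x y} (nc : w.NC) {i : ℕ} (hi : i < w.n)
    (h : (w.edge ⟨i, hi⟩).headAtRight) :
    ∀ d (hd : i + d < w.n), (w.edge ⟨i + d, hd⟩).headAtRight := by
  intro d
  induction d with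
  | zero => intro _; exact h
  | succ d ih =>
    intro hd
    have h2 := nc_fwd_succ nc (m := i + d) hd (ih (by omega))
    have h3 : w.edge ⟨i + (d + 1), hd⟩ = EdgeDir.fwd := h2
    rw [h3]
    exact Or.inl rfl

theorem nc_fwd_far {w : Walk G x y} (nc : w.NC) {i m : ℕ} (hi : i < w.n)
    (h : (w.edge ⟨i, hi⟩).headAtRight) (him : i < m) (hm : m < w.n) :
    w.edge ⟨m, hm⟩ = EdgeDir.fwd := by
  have h1 := nc_fwd_chain nc hi h (m - 1 - i) (by omega)
  have h2 := nc_fwd_succ nc (m := i + (m - 1 - i)) (by omega) h1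
  have e : (⟨i + (m - 1 - i) + 1, by omega⟩ : Fin w.n) = ⟨m, hm⟩ :=
    Fin.ext (show i + (m - 1 - i) + 1 = m by omega)
  rwa [e] at h2

theorem nc_bwd_chain {w : Walk G x y} (nc : w.NC) {i : ℕ} (hi : i < w.n)
    (h : w.edge ⟨i, hi⟩ = EdgeDir.bwd) :
    ∀ m (hm : m ≤ i), w.edge ⟨m, by omega⟩ = EdgeDir.bwd := by
  have key : ∀ d (hd : d ≤ i), w.edge ⟨i - d, by omega⟩ = EdgeDir.bwd := by
    intro d
    induction d with
    | zero => intro _; exact h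
    | succ d ih =>
      intro hd
      have h1 := ih (by omega)
      have e : (⟨i - d, by omega⟩ : Fin w.n) = ⟨(i - (d + 1)) + 1, by omega⟩ :=
        Fin.ext (show i - d = (i - (d + 1)) + 1 by omega)
      rw [e] at h1
      exact nc_bwd_pred nc (by omega) (by rw [h1]; exact Or.inl rfl)
  intro m hm
  have h1 := key (i - m) (by omega)
  have e : (⟨i - (i - m), by omega⟩ : Fin w.n) = ⟨m, by omega⟩ :=
    Fin.ext (show i - (i - m) = m by omega)
  rwa [e] at h1

theorem anc_fwd (w : Walk G x y) :
    ∀ (d a : ℕ) (h : a + d ≤ w.n),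
      (∀ m (hm1 : a ≤ m) (hm2 : m < a + d), w.edge ⟨m, by omega⟩ = EdgeDir.fwd) →
      G.Anc (w.node ⟨a, by omega⟩) (w.node ⟨a + d, by omega⟩) := by
  intro d
  induction d with
  | zero => intro a h _; exact Relation.ReflTransGen.refl
  | succ d ih =>
    intro a h he
    have h1 := ih a (by omega) (fun m hm1 hm2 => he m hm1 (by omega))
    refine Relation.ReflTransGen.tail h1 ?_
    have hv := w.valid ⟨a + d, by omega⟩
    rw [he (a + d) (by omega) (by omega)] at hv
    exact hv

theorem anc_bwd (w : Walk G x y) :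
    ∀ (d a : ℕ) (h : a + d ≤ w.n),
      (∀ m (hm1 : a ≤ m) (hm2 : m < a + d), w.edge ⟨m, by omega⟩ = EdgeDir.bwd) →
      G.Anc (w.node ⟨a + d, by omega⟩) (w.node ⟨a, by omega⟩) := by
  intro d
  induction d with
  | zero => intro a h _; exact Relation.ReflTransGen.refl
  | succ d ih =>
    intro a h he
    have h1 := ih a (by omega) (fun m hm1 hm2 => he m hm1 (by omega))
    refine Relation.ReflTransGen.head ?_ h1
    have hv := w.valid ⟨a + d, by omega⟩
    rw [he (a + d) (by omega) (by omega)] at hv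
    exact hv

/-- Splice: prefix of `p` up to index `j`, followed by the suffix of `q` from index `k`,
where `p.node j = q.node k`. -/
def splice {x z v y : α} (p : Walk G x z) (q : Walk G v y) (j k : ℕ)
    (hj : j ≤ p.n) (hk : k ≤ q.n)
    (hjk : p.node ⟨j, by omega⟩ = q.node ⟨k, by omega⟩) : Walk G x y where
  n := j + (q.n - k)
  node := fun m => if _h : m.1 < j then p.node ⟨m.1, by omega⟩
    else q.node ⟨k + (m.1 - j), by have := m.2; omega⟩
  edge := fun m => if _h : m.1 < j then p.edge ⟨m.1, by omega⟩
    else q.edge ⟨k + (m.1 - j), by have := m.2; omega⟩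
  first_eq := by
    beta_reduce
    have h0 : (0 : Fin (j + (q.n - k) + 1)).1 = 0 := rfl
    rcases Nat.eq_zero_or_pos j with hj0 | hj0
    · rw [dif_neg (show ¬ ((0 : Fin (j + (q.n - k) + 1)).1 < j) by omega)]
      have e : (⟨k + ((0 : Fin (j + (q.n - k) + 1)).1 - j), by have := h0; omega⟩ :
          Fin (q.n + 1)) = ⟨k, by omega⟩ :=
        Fin.ext (show k + ((0 : Fin (j + (q.n - k) + 1)).1 - j) = k by omega)
      rw [e, ← hjk]
      have e2 : (⟨j, by omega⟩ : Fin (p.n + 1)) = 0 := Fin.ext (show j = (0 : Fin (p.n+1)).1 by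
        have : (0 : Fin (p.n + 1)).1 = 0 := rfl
        omega)
      rw [e2, p.first_eq]
    · rw [dif_pos (show ((0 : Fin (j + (q.n - k) + 1)).1 < j) by omega)]
      have e : (⟨(0 : Fin (j + (q.n - k) + 1)).1, by omega⟩ : Fin (p.n + 1)) = 0 :=
        Fin.ext (show (0 : Fin (j + (q.n - k) + 1)).1 = (0 : Fin (p.n+1)).1 from rfl)
      rw [e, p.first_eq]
  last_eq := by
    beta_reduce
    have hL : (Fin.last (j + (q.n - k))).1 = j + (q.n - k) := rfl
    rw [dif_neg (show ¬ ((Fin.last (j + (q.n - k))).1 < j) by omega)]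
    have e : (⟨k + ((Fin.last (j + (q.n - k))).1 - j), by have := hL; omega⟩ :
        Fin (q.n + 1)) = Fin.last q.n :=
      Fin.ext (show k + ((Fin.last (j + (q.n - k))).1 - j) = (Fin.last q.n).1 by
        have h2 : (Fin.last q.n).1 = q.n := rfl
        omega)
    rw [e, q.last_eq]
  valid := by
    intro i
    beta_reduce
    have hcs : (Fin.castSucc i).1 = i.1 := rfl
    have hsc : (Fin.succ i).1 = i.1 + 1 := rfl
    have hi2 : i.1 < j + (q.n - k) := i.2
    rcases Nat.lt_or_ge i.1 j with hlt | hge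
    · rw [dif_pos hlt, dif_pos (show (Fin.castSucc i).1 < j by omega)]
      have hv := p.valid ⟨i.1, by omega⟩
      rcases Nat.lt_or_ge ((Fin.succ i).1) j with hs | hs
      · rw [dif_pos hs]
        exact hv
      · rw [dif_neg (by omega)]
        have e : (⟨k + ((Fin.succ i).1 - j), by have := (Fin.succ i).2; omega⟩ :
            Fin (q.n + 1)) = ⟨k, by omega⟩ :=
          Fin.ext (show k + ((Fin.succ i).1 - j) = k by omega)
        rw [e, ← hjk]
        have e2 : (⟨j, by omega⟩ : Fin (p.n + 1)) = ⟨i.1 + 1, by omega⟩ :=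
          Fin.ext (show j = i.1 + 1 by omega)
        rw [e2]
        have e3 : (⟨(Fin.castSucc i).1, by omega⟩ : Fin (p.n + 1)) = ⟨i.1, by omega⟩ :=
          Fin.ext (show (Fin.castSucc i).1 = i.1 from rfl)
        rw [e3]
        exact hv
    · rw [dif_neg (show ¬ ((Fin.castSucc i).1 < j) by omega),
          dif_neg (show ¬ (i.1 < j) by omega),
          dif_neg (show ¬ ((Fin.succ i).1 < j) by omega)]
      have hv := q.valid ⟨k + (i.1 - j), by omega⟩
      have e1 : (⟨k + ((Fin.castSucc i).1 - j), by have := (Fin.castSucc i).2; omega⟩ :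
          Fin (q.n + 1)) = ⟨k + (i.1 - j), by omega⟩ :=
        Fin.ext (show k + ((Fin.castSucc i).1 - j) = k + (i.1 - j) by omega)
      have e2 : (⟨k + ((Fin.succ i).1 - j), by have := (Fin.succ i).2; omega⟩ :
          Fin (q.n + 1)) = ⟨k + (i.1 - j) + 1, by omega⟩ :=
        Fin.ext (show k + ((Fin.succ i).1 - j) = k + (i.1 - j) + 1 by omega)
      rw [e1, e2]
      exact hv

section SpliceAccess

variable {x z v y : α} (p : Walk G x z) (q : Walk G v y) (j k : ℕ)
    (hj : j ≤ p.n) (hk : k ≤ q.n)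
    (hjk : p.node ⟨j, by omega⟩ = q.node ⟨k, by omega⟩)

theorem splice_n : (splice p q j k hj hk hjk).n = j + (q.n - k) := rfl

theorem splice_node_lt {m : ℕ} (hm : m < j) :
    (splice p q j k hj hk hjk).node ⟨m, by show m < j + (q.n - k) + 1; omega⟩
      = p.node ⟨m, by omega⟩ := by
  show dite _ _ _ = _
  rw [dif_pos hm]

theorem splice_node_ge {m : ℕ} (hm1 : j ≤ m) (hm2 : m ≤ j + (q.n - k)) :
    (splice p q j k hj hk hjk).node ⟨m, by show m < j + (q.n - k) + 1; omega⟩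
      = q.node ⟨k + (m - j), by omega⟩ := by
  show dite _ _ _ = _
  rw [dif_neg (show ¬ (m < j) by omega)]

theorem splice_edge_lt {m : ℕ} (hm : m < j) :
    (splice p q j k hj hk hjk).edge ⟨m, by show m < j + (q.n - k); omega⟩
      = p.edge ⟨m, by omega⟩ := by
  show dite _ _ _ = _
  rw [dif_pos hm]

theorem splice_edge_ge {m : ℕ} (hm1 : j ≤ m) (hm2 : m < j + (q.n - k)) :
    (splice p q j k hj hk hjk).edge ⟨m, by show m < j + (q.n - k); omega⟩
      = q.edge ⟨k + (m - j), by omega⟩ := by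
  show dite _ _ _ = _
  rw [dif_neg (show ¬ (m < j) by omega)]

end SpliceAccess

end DMG.Walk

end Aux

/-- LCD with the weaker background assumption `X ∉ an(C)`. -/
theorem lcd_graphical_weak
    {α : Type*} [Fintype α] (G : DMG α) (C X Y : α)
    (hCX : C ≠ X) (hCY : C ≠ Y) (hXY : X ≠ Y)
    (hXC : ¬ G.Anc X C)
    (hsep : G.sigmaSep C Y {X})
    (hdep : ¬ G.sigmaSep C Y ∅) :
    G.Anc X Y ∧ ¬ G.Anc Y X ∧ ¬ G.Confounded X Y := by
  classical
  unfold DMG.sigmaSep at hdep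
  push_neg at hdep
  obtain ⟨p, hppath, hpopen⟩ := hdep
  -- `p` has no colliders
  have nc : p.NC := by
    intro t ht hc
    exact hpopen (Or.inr (Or.inr (Or.inl ⟨t, ht, hc, by simp [DMG.ancSet]⟩)))
  -- `p` is blocked by `{X}`
  have hbl := hsep p hppath
  unfold DMG.Walk.Blocked at hbl
  rcases hbl with hb | hb | ⟨t, ht, hcol, -⟩ | ⟨i, hi, hnci, hmem, hor⟩
  · have hb' : C = X := hb
    exact absurd hb' hCX
  · have hb' : Y = X := hb
    exact absurd hb'.symm hXY
  · exact absurd hcol (nc t ht)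
  have hX : p.node ⟨i + 1, by omega⟩ = X := by simpa using hmem
  have hXanC : p.edge ⟨i, by omega⟩ = EdgeDir.bwd → G.Anc X C := by
    intro he
    have h1 := p.anc_bwd (i + 1) 0 (by omega)
      (fun m hm1 hm2 => DMG.Walk.nc_bwd_chain nc (i := i) (by omega) he m (by omega))
    have e1 : (⟨0 + (i + 1), by omega⟩ : Fin (p.n + 1)) = ⟨i + 1, by omega⟩ :=
      Fin.ext (show 0 + (i + 1) = i + 1 by omega)
    have e0 : (⟨0, by omega⟩ : Fin (p.n + 1)) = 0 :=
      Fin.ext (show 0 = ((0 : Fin (p.n + 1)) : ℕ) from rfl)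
    rw [e1, e0, hX, p.first_eq] at h1
    exact h1
  rcases hor with ⟨he, -⟩ | ⟨he, hscc⟩
  · exact absurd (hXanC he) hXC
  rw [hX] at hscc
  have hiR : (p.edge ⟨i, by omega⟩).headAtRight := by
    by_contra hR
    exact hXC (hXanC (EdgeDir.eq_bwd_of_not_headAtRight_s3 hR))
  have hfwd : ∀ m (hm1 : i + 1 ≤ m) (hm2 : m < p.n), p.edge ⟨m, hm2⟩ = EdgeDir.fwd := by
    intro m hm1 hm2
    rcases eq_or_lt_of_le hm1 with heq | hlt
    · subst heq; exact he
    · exact DMG.Walk.nc_fwd_far nc hi (by rw [he]; exact Or.inl rfl) hlt hm2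
  have hAncXY : G.Anc X Y := by
    have h1 := p.anc_fwd (p.n - (i + 1)) (i + 1) (by omega)
      (fun m hm1 hm2 => hfwd m hm1 (by omega))
    have e1 : (⟨(i + 1) + (p.n - (i + 1)), by omega⟩ : Fin (p.n + 1)) = Fin.last p.n :=
      Fin.ext (show (i + 1) + (p.n - (i + 1)) = ((Fin.last p.n) : ℕ) by
        have h2 : ((Fin.last p.n) : ℕ) = p.n := rfl
        omega)
    rw [e1, p.last_eq, hX] at h1
    exact h1
  have hstep : G.dir X (p.node ⟨i + 2, by omega⟩) := by
    have hv := p.valid ⟨i + 1, hi⟩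
    rw [he] at hv
    have h2 : G.dir (p.node ⟨i + 1, by omega⟩) (p.node ⟨i + 2, by omega⟩) := hv
    rwa [hX] at h2
  have hanc2Y : G.Anc (p.node ⟨i + 2, by omega⟩) Y := by
    have h1 := p.anc_fwd (p.n - (i + 2)) (i + 2) (by omega)
      (fun m hm1 hm2 => hfwd m (by omega) (by omega))
    have e1 : (⟨(i + 2) + (p.n - (i + 2)), by omega⟩ : Fin (p.n + 1)) = Fin.last p.n :=
      Fin.ext (show (i + 2) + (p.n - (i + 2)) = ((Fin.last p.n) : ℕ) by
        have h2 : ((Fin.last p.n) : ℕ) = p.n := rfl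
        omega)
    rw [e1, p.last_eq] at h1
    exact h1
  refine ⟨hAncXY, ?_, ?_⟩
  · intro hYX
    exact hscc ⟨Relation.ReflTransGen.trans hanc2Y hYX, Relation.ReflTransGen.single hstep⟩
  -- Unconfoundedness
  rintro ⟨q, hqpath, hq0, hqL, -, hqnc⟩
  have hexP : ∃ m, ∃ _hm : m ≤ i + 1, ∃ s : Fin (q.n + 1), q.node s = p.node ⟨m, by omega⟩ :=
    ⟨i + 1, le_refl _, 0, by rw [q.first_eq, hX]⟩
  obtain ⟨j, ⟨hjP, s, hs⟩, hjmin⟩ :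
      ∃ j, (∃ _hm : j ≤ i + 1, ∃ s : Fin (q.n + 1), q.node s = p.node ⟨j, by omega⟩) ∧
        ∀ m, m < j →
          ¬ (∃ _hm : m ≤ i + 1, ∃ s : Fin (q.n + 1), q.node s = p.node ⟨m, by omega⟩) :=
    ⟨Nat.find hexP, Nat.find_spec hexP, fun m hm => Nat.find_min hexP hm⟩
  have hmin : ∀ m (_hmj : m < j), ∀ u : Fin (q.n + 1), q.node u ≠ p.node ⟨m, by omega⟩ := by
    intro m hm u hne
    exact hjmin m hm ⟨by omega, u, hne⟩
  have hk : s.1 ≤ q.n := by have := s.2; omega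
  have hj' : j ≤ p.n := by omega
  have hjk : p.node ⟨j, by omega⟩ = q.node ⟨s.1, by omega⟩ := by
    rw [← hs]
  have hrn : (DMG.Walk.splice p q j s.1 hj' hk hjk).n = j + (q.n - s.1) := rfl
  -- node and edge access
  have hnodeL : ∀ m (hm : m < j),
      (DMG.Walk.splice p q j s.1 hj' hk hjk).node ⟨m, by omega⟩ = p.node ⟨m, by omega⟩ :=
    fun m hm => DMG.Walk.splice_node_lt p q j s.1 hj' hk hjk hm
  have hnodeG : ∀ m (hm1 : j ≤ m) (hm2 : m ≤ j + (q.n - s.1)),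
      (DMG.Walk.splice p q j s.1 hj' hk hjk).node ⟨m, by omega⟩
        = q.node ⟨s.1 + (m - j), by omega⟩ :=
    fun m hm1 hm2 => DMG.Walk.splice_node_ge p q j s.1 hj' hk hjk hm1 hm2
  have hedgeL : ∀ m (hm : m < j),
      (DMG.Walk.splice p q j s.1 hj' hk hjk).edge ⟨m, by omega⟩ = p.edge ⟨m, by omega⟩ :=
    fun m hm => DMG.Walk.splice_edge_lt p q j s.1 hj' hk hjk hm
  have hedgeG : ∀ m (hm1 : j ≤ m) (hm2 : m < j + (q.n - s.1)),
      (DMG.Walk.splice p q j s.1 hj' hk hjk).edge ⟨m, by omega⟩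
        = q.edge ⟨s.1 + (m - j), by omega⟩ :=
    fun m hm1 hm2 => DMG.Walk.splice_edge_ge p q j s.1 hj' hk hjk hm1 hm2
  have hq0X : q.node ⟨0, by omega⟩ = X := by
    have e0 : (⟨0, by omega⟩ : Fin (q.n + 1)) = 0 :=
      Fin.ext (show 0 = ((0 : Fin (q.n + 1)) : ℕ) from rfl)
    rw [e0, q.first_eq]
  have hnodeJ : (DMG.Walk.splice p q j s.1 hj' hk hjk).node ⟨j, by omega⟩
      = p.node ⟨j, by omega⟩ := by
    rw [hnodeG j (le_refl j) (by omega), hjk]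
    exact congrArg q.node (Fin.ext (show s.1 + (j - j) = s.1 by omega))
  -- the spliced walk is a path
  have hrpath : (DMG.Walk.splice p q j s.1 hj' hk hjk).IsPath := by
    intro a b hab
    have ha2 : a.1 < j + (q.n - s.1) + 1 := a.2
    have hb2 : b.1 < j + (q.n - s.1) + 1 := b.2
    rcases Nat.lt_or_ge a.1 j with haj | haj <;> rcases Nat.lt_or_ge b.1 j with hbj | hbj
    · have hA : (DMG.Walk.splice p q j s.1 hj' hk hjk).node a = p.node ⟨a.1, by omega⟩ :=
        hnodeL a.1 haj
      have hB : (DMG.Walk.splice p q j s.1 hj' hk hjk).node b = p.node ⟨b.1, by omega⟩ :=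
        hnodeL b.1 hbj
      rw [hA, hB] at hab
      have hv := congrArg Fin.val (hppath hab)
      exact Fin.ext hv
    · have hA : (DMG.Walk.splice p q j s.1 hj' hk hjk).node a = p.node ⟨a.1, by omega⟩ :=
        hnodeL a.1 haj
      have hB : (DMG.Walk.splice p q j s.1 hj' hk hjk).node b
          = q.node ⟨s.1 + (b.1 - j), by omega⟩ := hnodeG b.1 hbj (by omega)
      rw [hA, hB] at hab
      exact absurd hab.symm (hmin a.1 haj _)
    · have hA : (DMG.Walk.splice p q j s.1 hj' hk hjk).node a
          = q.node ⟨s.1 + (a.1 - j), by omega⟩ := hnodeG a.1 haj (by omega)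
      have hB : (DMG.Walk.splice p q j s.1 hj' hk hjk).node b = p.node ⟨b.1, by omega⟩ :=
        hnodeL b.1 hbj
      rw [hA, hB] at hab
      exact absurd hab (hmin b.1 hbj _)
    · have hA : (DMG.Walk.splice p q j s.1 hj' hk hjk).node a
          = q.node ⟨s.1 + (a.1 - j), by omega⟩ := hnodeG a.1 haj (by omega)
      have hB : (DMG.Walk.splice p q j s.1 hj' hk hjk).node b
          = q.node ⟨s.1 + (b.1 - j), by omega⟩ := hnodeG b.1 hbj (by omega)
      rw [hA, hB] at hab
      have hv0 := congrArg Fin.val (hqpath hab)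
      have hv : s.1 + (a.1 - j) = s.1 + (b.1 - j) := hv0
      exact Fin.ext (show a.1 = b.1 by omega)
  -- the spliced walk is blocked by {X}, derive a contradiction
  have hbl2 := hsep _ hrpath
  unfold DMG.Walk.Blocked at hbl2
  rcases hbl2 with hb | hb | ⟨t, ht, hcol, hnanc⟩ | ⟨t, ht, hncol, hmem2, -⟩
  · have hb' : C = X := hb
    exact hCX hb'
  · have hb' : Y = X := hb
    exact hXY hb'.symm
  · -- collider clause
    have ht' : t + 1 < j + (q.n - s.1) := ht
    obtain ⟨hc1, hc2⟩ := hcol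
    rcases Nat.lt_trichotomy (t + 1) j with hc | hc | hc
    · -- both edges from p : contradicts no colliders on p
      have hA : (p.edge ⟨t, by omega⟩).headAtRight := by
        rw [← hedgeL t (by omega)]; exact hc1
      have hB : (p.edge ⟨t + 1, by omega⟩).headAtLeft := by
        rw [← hedgeL (t + 1) (by omega)]; exact hc2
      exact nc t (by omega) ⟨hA, hB⟩
    · -- collider at the junction: it is an ancestor of X
      have hAncjX : G.Anc (p.node ⟨j, by omega⟩) X := by
        by_cases hji : j = i + 1
        · have hpjX : p.node ⟨j, by omega⟩ = X := by
            rw [show (⟨j, by omega⟩ : Fin (p.n + 1)) = ⟨i + 1, by omega⟩ from Fin.ext hji]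
            exact hX
          rw [hpjX]
          exact Relation.ReflTransGen.refl
        · have hjlt : j < i + 1 := by omega
          have hA : (p.edge ⟨t, by omega⟩).headAtRight := by
            rw [← hedgeL t (by omega)]; exact hc1
          have hEj : p.edge ⟨j, by omega⟩ = EdgeDir.fwd := by
            have h2 := DMG.Walk.nc_fwd_succ nc (m := t) (by omega) hA
            rw [show (⟨t + 1, by omega⟩ : Fin p.n) = ⟨j, by omega⟩ from
              Fin.ext (show t + 1 = j from hc)] at h2
            exact h2
          have hfwd2 : ∀ m (hm1 : j ≤ m) (hm2 : m < i + 1), p.edge ⟨m, by omega⟩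
              = EdgeDir.fwd := by
            intro m hm1 hm2
            rcases eq_or_lt_of_le hm1 with heq | hlt
            · subst heq; exact hEj
            · exact DMG.Walk.nc_fwd_far nc (i := j) (by omega) (by rw [hEj]; exact Or.inl rfl) hlt
                (by omega)
          have h1 := p.anc_fwd ((i + 1) - j) j (by omega)
            (fun m hm1 hm2 => hfwd2 m hm1 (by omega))
          rw [show (⟨j + ((i + 1) - j), by omega⟩ : Fin (p.n + 1)) = ⟨i + 1, by omega⟩ from
            Fin.ext (show j + ((i + 1) - j) = i + 1 by omega), hX] at h1
          exact h1
      apply hnanc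
      refine ⟨X, rfl, ?_⟩
      have hNt : (DMG.Walk.splice p q j s.1 hj' hk hjk).node ⟨t + 1, by omega⟩
          = p.node ⟨j, by omega⟩ := by
        rw [show (⟨t + 1, by omega⟩ :
            Fin ((DMG.Walk.splice p q j s.1 hj' hk hjk).n + 1)) = ⟨j, by omega⟩ from
          Fin.ext (show t + 1 = j from hc)]
        exact hnodeJ
      rw [hNt]
      exact hAncjX
    · -- both edges from q : contradicts no colliders on q
      have hA : (q.edge ⟨s.1 + (t - j), by omega⟩).headAtRight := by
        rw [← hedgeG t (by omega) (by omega)]; exact hc1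
      have hB : (q.edge ⟨s.1 + (t + 1 - j), by omega⟩).headAtLeft := by
        rw [← hedgeG (t + 1) (by omega) (by omega)]; exact hc2
      refine hqnc (s.1 + (t - j)) (by omega) ⟨hA, ?_⟩
      rw [show (⟨s.1 + (t - j) + 1, by omega⟩ : Fin q.n) = ⟨s.1 + (t + 1 - j), by omega⟩ from
        Fin.ext (show s.1 + (t - j) + 1 = s.1 + (t + 1 - j) by omega)]
      exact hB
  · -- non-collider clause
    have ht' : t + 1 < j + (q.n - s.1) := ht
    have hm2 : (DMG.Walk.splice p q j s.1 hj' hk hjk).node ⟨t + 1, by omega⟩ = X := hmem2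
    rcases Nat.lt_trichotomy (t + 1) j with hc | hc | hc
    · have hpx : p.node ⟨t + 1, by omega⟩ = p.node ⟨i + 1, by omega⟩ := by
        rw [← hnodeL (t + 1) hc, hm2]
        exact hX.symm
      have hv0 := congrArg Fin.val (hppath hpx)
      have hv : t + 1 = i + 1 := hv0
      omega
    · by_cases hji : j = i + 1
      · -- the junction equals X and is a collider: contradiction with hncol
        have hpjX : p.node ⟨j, by omega⟩ = X := by
          rw [show (⟨j, by omega⟩ : Fin (p.n + 1)) = ⟨i + 1, by omega⟩ from Fin.ext hji]
          exact hX
        have hs0 : s.1 = 0 := by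
          have hqq : q.node ⟨s.1, by omega⟩ = q.node ⟨0, by omega⟩ := by
            rw [← hjk, hpjX, hq0X]
          have hv0 := congrArg Fin.val (hqpath hqq)
          exact hv0
        have h1 : ((DMG.Walk.splice p q j s.1 hj' hk hjk).edge ⟨t, by omega⟩).headAtRight := by
          rw [hedgeL t (by omega)]
          rw [show (⟨t, by omega⟩ : Fin p.n) = ⟨i, by omega⟩ from
            Fin.ext (show t = i by omega)]
          exact hiR
        have h2 : ((DMG.Walk.splice p q j s.1 hj' hk hjk).edge ⟨t + 1, by omega⟩).headAtLeft := by
          rw [hedgeG (t + 1) (by omega) (by omega)]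
          rw [show (⟨s.1 + (t + 1 - j), by omega⟩ : Fin q.n) = ⟨0, hq0⟩ from
            Fin.ext (show s.1 + (t + 1 - j) = 0 by omega)]
          exact hqL
        exact hncol ⟨h1, h2⟩
      · -- junction different from X : cannot lie in {X}
        have hNt : (DMG.Walk.splice p q j s.1 hj' hk hjk).node ⟨t + 1, by omega⟩
            = p.node ⟨j, by omega⟩ := by
          rw [show (⟨t + 1, by omega⟩ :
              Fin ((DMG.Walk.splice p q j s.1 hj' hk hjk).n + 1)) = ⟨j, by omega⟩ from
            Fin.ext (show t + 1 = j from hc)]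
          exact hnodeJ
        have hpx : p.node ⟨j, by omega⟩ = p.node ⟨i + 1, by omega⟩ := by
          rw [← hNt, hm2]
          exact hX.symm
        have hv0 := congrArg Fin.val (hppath hpx)
        have hv : j = i + 1 := hv0
        exact hji hv
    · -- a node of q strictly after X cannot equal X
      have hqq : q.node ⟨s.1 + (t + 1 - j), by omega⟩ = q.node ⟨0, by omega⟩ := by
        rw [← hnodeG (t + 1) (by omega) (by omega), hm2, hq0X]
      have hv0 := congrArg Fin.val (hqpath hqq)
      have hv : s.1 + (t + 1 - j) = 0 := hv0
      omega
end

section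
/- (Witness for the impossibility of three-variable causal discovery under selection bias.) Let G₁ be the directed mixed graph on node set {C, X, Y, S} whose edges are exactly the directed edges C → X, X → S, Y → S, and let G₂ be the directed mixed graph on the same node set whose edges are exactly the directed edges C → S, X → S, X → Y. Then: (a) in both G₁ and G₂, no node other than C is an ancestor of C; (b) for every pair of distinct nodes A, B ∈ {C, X, Y} and every subset Z ⊆ {C, X, Y} ∖ {A, B}, the σ-separation A ⊥ B | Z ∪ {S} holds in G₁ if and only if it holds in G₂; (c) X ∈ an(Y) in G₂ but X ∉ an(Y) in G₁. -/
/-- The node set `{C, X, Y, S}`. -/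
inductive N4 : Type
  | C | X | Y | S
  deriving DecidableEq

open N4 in
/-- The DMG with exactly the directed edges `C → X`, `X → S`, `Y → S`. -/
def G1 : DMG N4 where
  dir a b := (a = C ∧ b = X) ∨ (a = X ∧ b = S) ∨ (a = Y ∧ b = S)
  bidir _ _ := False
  dir_irrefl := by rintro a (⟨rfl, h⟩ | ⟨rfl, h⟩ | ⟨rfl, h⟩) <;> simp at h
  bidir_irrefl := fun _ h => h
  bidir_symm := fun _ _ h => h.elim

open N4 in
/-- The DMG with exactly the directed edges `C → S`, `X → S`, `X → Y`. -/
def G2 : DMG N4 where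
  dir a b := (a = C ∧ b = S) ∨ (a = X ∧ b = S) ∨ (a = X ∧ b = Y)
  bidir _ _ := False
  dir_irrefl := by rintro a (⟨rfl, h⟩ | ⟨rfl, h⟩ | ⟨rfl, h⟩) <;> simp at h
  bidir_irrefl := fun _ h => h
  bidir_symm := fun _ _ h => h.elim

open N4 EdgeDir

instance : Fintype N4 := ⟨{C, X, Y, S}, by intro x; cases x <;> decide⟩

lemma g1_dir_C (b : N4) : ¬ G1.dir b C := by simp [G1]
lemma g2_dir_C (b : N4) : ¬ G2.dir b C := by simp [G2]
lemma g1_dir_S (b : N4) : ¬ G1.dir S b := by simp [G1]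
lemma g2_dir_Y (b : N4) : ¬ G2.dir Y b := by simp [G2]

lemma g1_anc_C (v : N4) (h : G1.Anc v C) : v = C := by
  have key : ∀ b, G1.Anc v b → b = C → v = C := by
    intro b h
    induction h with
    | refl => exact fun h => h
    | tail _ e _ => rintro rfl; exact absurd e (g1_dir_C _)
  exact key C h rfl

lemma g2_anc_C (v : N4) (h : G2.Anc v C) : v = C := by
  have key : ∀ b, G2.Anc v b → b = C → v = C := by
    intro b h
    induction h with
    | refl => exact fun h => h
    | tail _ e _ => rintro rfl; exact absurd e (g2_dir_C _)
  exact key C h rfl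

lemma g1_anc_S (b : N4) (h : G1.Anc S b) : b = S := by
  induction h with
  | refl => rfl
  | tail _ e ih => subst ih; exact absurd e (g1_dir_S _)

lemma g2_anc_Y (b : N4) (h : G2.Anc Y b) : b = Y := by
  induction h with
  | refl => rfl
  | tail _ e ih => subst ih; exact absurd e (g2_dir_Y _)

lemma g1_anc_X (b : N4) (h : G1.Anc X b) : b = X ∨ b = S := by
  induction h with
  | refl => left; rfl
  | tail _ e ih =>
    rcases ih with rfl | rfl
    · simp only [G1] at e
      rcases e with ⟨h1, _⟩ | ⟨_, rfl⟩ | ⟨h1, _⟩ <;> simp_all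
    · exact absurd e (g1_dir_S _)

lemma conCX1 (Cset : Set N4) (hC : C ∉ Cset) (hX : X ∉ Cset) : ¬ G1.sigmaSep C X Cset := by
  intro h
  have hb := h { n := 1, node := ![C,X], edge := ![.fwd], first_eq := rfl, last_eq := rfl,
                 valid := by intro i; fin_cases i; simp [DMG.StepValid, G1] }
    (show Function.Injective ![C,X] by decide)
  simp [DMG.Walk.Blocked] at hb
  exact hb.elim hC hX


lemma conCX2 (Cset : Set N4) (hC : C ∉ Cset) (hX : X ∉ Cset) (hS : S ∈ Cset) :
    ¬ G2.sigmaSep C X Cset := by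
  intro h
  have hb := h { n := 2, node := ![C,S,X], edge := ![.fwd,.bwd], first_eq := rfl, last_eq := rfl,
                 valid := by intro i; fin_cases i <;> simp [DMG.StepValid, G2] }
    (show Function.Injective ![C,S,X] by decide)
  simp only [DMG.Walk.Blocked, DMG.Walk.IsColliderAt, EdgeDir.headAtRight, EdgeDir.headAtLeft] at hb
  rcases hb with h1 | h1 | ⟨i, hi, hcol⟩ | ⟨i, hi, hncol, hrest⟩
  · exact hC h1
  · exact hX h1
  · obtain rfl : i = 0 := by omega
    simp at hcol
    exact hcol ⟨S, hS, .refl⟩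
  · obtain rfl : i = 0 := by omega
    simp at hncol

lemma sepCY1 : G1.sigmaSep C Y ({X, S} : Set N4) := by
  rintro ⟨n, node, edge, h0, hl, hv⟩ hp
  simp only [DMG.Walk.IsPath] at hp
  have hn4 : n + 1 ≤ 4 := by
    have := Fintype.card_le_of_injective _ hp
    simpa [show Fintype.card N4 = 4 from rfl] using this
  obtain _|_|_|_|n := n
  · exact absurd ((show node 0 = node (Fin.last 0) from rfl).symm.trans hl ▸ h0) (by decide)
  · -- n = 1
    have s0 := hv ⟨0, by omega⟩
    have hl1 : node ⟨1, by omega⟩ = Y := hl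
    have h00 : node ⟨0, by omega⟩ = C := h0
    rw [show Fin.castSucc ⟨0, by omega⟩ = ⟨0, by omega⟩ from rfl,
        show Fin.succ (⟨0, by omega⟩ : Fin 1) = ⟨1, by omega⟩ from rfl, h00, hl1] at s0
    cases he : edge ⟨0, by omega⟩ <;> rw [he] at s0 <;> simp [DMG.StepValid, G1] at s0
  · -- n = 2
    have h00 : node ⟨0, by omega⟩ = C := h0
    have hl2 : node ⟨2, by omega⟩ = Y := hl
    have s0 : G1.StepValid (node ⟨0, by omega⟩) (edge ⟨0, by omega⟩) (node ⟨1, by omega⟩) :=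
      hv ⟨0, by omega⟩
    have s1 : G1.StepValid (node ⟨1, by omega⟩) (edge ⟨1, by omega⟩) (node ⟨2, by omega⟩) :=
      hv ⟨1, by omega⟩
    rw [h00] at s0
    cases he0 : edge ⟨0, by omega⟩ <;> rw [he0] at s0 <;> simp [DMG.StepValid, G1] at s0
    have s0' : node ⟨1, by omega⟩ = X := s0
    rw [s0', hl2] at s1
    cases he1 : edge ⟨1, by omega⟩ <;> rw [he1] at s1 <;> simp [DMG.StepValid, G1] at s1
  · -- n = 3
    have h00 : node ⟨0, by omega⟩ = C := h0
    have hl3 : node ⟨3, by omega⟩ = Y := hl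
    have s0 : G1.StepValid (node ⟨0, by omega⟩) (edge ⟨0, by omega⟩) (node ⟨1, by omega⟩) :=
      hv ⟨0, by omega⟩
    have s1 : G1.StepValid (node ⟨1, by omega⟩) (edge ⟨1, by omega⟩) (node ⟨2, by omega⟩) :=
      hv ⟨1, by omega⟩
    have s2 : G1.StepValid (node ⟨2, by omega⟩) (edge ⟨2, by omega⟩) (node ⟨3, by omega⟩) :=
      hv ⟨2, by omega⟩
    rw [h00] at s0
    cases he0 : edge ⟨0, by omega⟩ <;> rw [he0] at s0 <;> simp [DMG.StepValid, G1] at s0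
    have s0' : node ⟨1, by omega⟩ = X := s0
    rw [s0'] at s1
    cases he1 : edge ⟨1, by omega⟩ <;> rw [he1] at s1 <;> simp [DMG.StepValid, G1] at s1
    case bwd =>
      have s1' : node ⟨2, by omega⟩ = C := s1
      exact absurd (hp (s1'.trans h00.symm)) (by decide)
    have s1' : node ⟨2, by omega⟩ = S := s1
    rw [s1', hl3] at s2
    cases he2 : edge ⟨2, by omega⟩ <;> rw [he2] at s2 <;> simp [DMG.StepValid, G1] at s2
    -- now edges are fwd, fwd, bwd and nodes C, X, S, Y; block at the noncollider X
    have hnc : ¬ ((edge ⟨0, by omega⟩).headAtRight ∧ (edge ⟨1, by omega⟩).headAtLeft) := by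
      rintro ⟨-, hc⟩
      rw [he1] at hc
      simp [EdgeDir.headAtLeft] at hc
    have hmem : node ⟨1, by omega⟩ ∈ ({X, S} : Set N4) := by rw [s0']; simp
    have hscc : node ⟨2, by omega⟩ ∉ G1.scc (node ⟨1, by omega⟩) := by
      rw [s0', s1']
      rintro ⟨hanc, -⟩
      exact absurd (g1_anc_S _ hanc) (by decide)
    exact Or.inr (Or.inr (Or.inr ⟨0, (by omega : 0 + 1 < 0 + 1 + 1 + 1), hnc, hmem,
      Or.inr ⟨he1, hscc⟩⟩))
  · omega

lemma sepYC1 : G1.sigmaSep Y C ({X, S} : Set N4) := by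
  rintro ⟨n, node, edge, h0, hl, hv⟩ hp
  simp only [DMG.Walk.IsPath] at hp
  have hn4 : n + 1 ≤ 4 := by
    have := Fintype.card_le_of_injective _ hp
    simpa [show Fintype.card N4 = 4 from rfl] using this
  obtain _|_|_|_|n := n
  · exact absurd ((show node 0 = node (Fin.last 0) from rfl).symm.trans hl ▸ h0) (by decide)
  · -- n = 1
    have s0 := hv ⟨0, by omega⟩
    have hl1 : node ⟨1, by omega⟩ = C := hl
    have h00 : node ⟨0, by omega⟩ = Y := h0
    rw [show Fin.castSucc ⟨0, by omega⟩ = ⟨0, by omega⟩ from rfl,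
        show Fin.succ (⟨0, by omega⟩ : Fin 1) = ⟨1, by omega⟩ from rfl, h00, hl1] at s0
    cases he : edge ⟨0, by omega⟩ <;> rw [he] at s0 <;> simp [DMG.StepValid, G1] at s0
  · -- n = 2
    have h00 : node ⟨0, by omega⟩ = Y := h0
    have hl2 : node ⟨2, by omega⟩ = C := hl
    have s0 : G1.StepValid (node ⟨0, by omega⟩) (edge ⟨0, by omega⟩) (node ⟨1, by omega⟩) :=
      hv ⟨0, by omega⟩
    have s1 : G1.StepValid (node ⟨1, by omega⟩) (edge ⟨1, by omega⟩) (node ⟨2, by omega⟩) :=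
      hv ⟨1, by omega⟩
    rw [h00] at s0
    cases he0 : edge ⟨0, by omega⟩ <;> rw [he0] at s0 <;> simp [DMG.StepValid, G1] at s0
    have s0' : node ⟨1, by omega⟩ = S := s0
    rw [s0', hl2] at s1
    cases he1 : edge ⟨1, by omega⟩ <;> rw [he1] at s1 <;> simp [DMG.StepValid, G1] at s1
  · -- n = 3
    have h00 : node ⟨0, by omega⟩ = Y := h0
    have hl3 : node ⟨3, by omega⟩ = C := hl
    have s0 : G1.StepValid (node ⟨0, by omega⟩) (edge ⟨0, by omega⟩) (node ⟨1, by omega⟩) :=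
      hv ⟨0, by omega⟩
    have s1 : G1.StepValid (node ⟨1, by omega⟩) (edge ⟨1, by omega⟩) (node ⟨2, by omega⟩) :=
      hv ⟨1, by omega⟩
    have s2 : G1.StepValid (node ⟨2, by omega⟩) (edge ⟨2, by omega⟩) (node ⟨3, by omega⟩) :=
      hv ⟨2, by omega⟩
    rw [h00] at s0
    cases he0 : edge ⟨0, by omega⟩ <;> rw [he0] at s0 <;> simp [DMG.StepValid, G1] at s0
    have s0' : node ⟨1, by omega⟩ = S := s0
    rw [s0'] at s1
    cases he1 : edge ⟨1, by omega⟩ <;> rw [he1] at s1 <;> simp [DMG.StepValid, G1] at s1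
    have s1' : node ⟨2, by omega⟩ = X ∨ node ⟨2, by omega⟩ = Y := s1
    rcases s1' with s1' | s1'
    · rw [s1', hl3] at s2
      cases he2 : edge ⟨2, by omega⟩ <;> rw [he2] at s2 <;> simp [DMG.StepValid, G1] at s2
      -- edges fwd, bwd, bwd; nodes Y, S, X, C; block at noncollider X (i = 1)
      have hnc : ¬ ((edge ⟨1, by omega⟩).headAtRight ∧ (edge ⟨2, by omega⟩).headAtLeft) := by
        rintro ⟨hc, -⟩
        rw [he1] at hc
        simp [EdgeDir.headAtRight] at hc
      have hmem : node ⟨2, by omega⟩ ∈ ({X, S} : Set N4) := by rw [s1']; simp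
      have hscc : node ⟨1, by omega⟩ ∉ G1.scc (node ⟨2, by omega⟩) := by
        rw [s0', s1']
        rintro ⟨hanc, -⟩
        exact absurd (g1_anc_S _ hanc) (by decide)
      exact Or.inr (Or.inr (Or.inr ⟨1, (by omega : 1 + 1 < 0 + 1 + 1 + 1), hnc, hmem,
        Or.inl ⟨he1, hscc⟩⟩))
    · exact absurd (hp (s1'.trans h00.symm)) (by decide)
  · omega

lemma sepCY2 : G2.sigmaSep C Y ({X, S} : Set N4) := by
  rintro ⟨n, node, edge, h0, hl, hv⟩ hp
  simp only [DMG.Walk.IsPath] at hp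
  have hn4 : n + 1 ≤ 4 := by
    have := Fintype.card_le_of_injective _ hp
    simpa [show Fintype.card N4 = 4 from rfl] using this
  obtain _|_|_|_|n := n
  · exact absurd ((show node 0 = node (Fin.last 0) from rfl).symm.trans hl ▸ h0) (by decide)
  · -- n = 1
    have s0 := hv ⟨0, by omega⟩
    have hl1 : node ⟨1, by omega⟩ = Y := hl
    have h00 : node ⟨0, by omega⟩ = C := h0
    rw [show Fin.castSucc ⟨0, by omega⟩ = ⟨0, by omega⟩ from rfl,
        show Fin.succ (⟨0, by omega⟩ : Fin 1) = ⟨1, by omega⟩ from rfl, h00, hl1] at s0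
    cases he : edge ⟨0, by omega⟩ <;> rw [he] at s0 <;> simp [DMG.StepValid, G2] at s0
  · -- n = 2
    have h00 : node ⟨0, by omega⟩ = C := h0
    have hl2 : node ⟨2, by omega⟩ = Y := hl
    have s0 : G2.StepValid (node ⟨0, by omega⟩) (edge ⟨0, by omega⟩) (node ⟨1, by omega⟩) :=
      hv ⟨0, by omega⟩
    have s1 : G2.StepValid (node ⟨1, by omega⟩) (edge ⟨1, by omega⟩) (node ⟨2, by omega⟩) :=
      hv ⟨1, by omega⟩
    rw [h00] at s0
    cases he0 : edge ⟨0, by omega⟩ <;> rw [he0] at s0 <;> simp [DMG.StepValid, G2] at s0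
    have s0' : node ⟨1, by omega⟩ = S := s0
    rw [s0', hl2] at s1
    cases he1 : edge ⟨1, by omega⟩ <;> rw [he1] at s1 <;> simp [DMG.StepValid, G2] at s1
  · -- n = 3
    have h00 : node ⟨0, by omega⟩ = C := h0
    have hl3 : node ⟨3, by omega⟩ = Y := hl
    have s0 : G2.StepValid (node ⟨0, by omega⟩) (edge ⟨0, by omega⟩) (node ⟨1, by omega⟩) :=
      hv ⟨0, by omega⟩
    have s1 : G2.StepValid (node ⟨1, by omega⟩) (edge ⟨1, by omega⟩) (node ⟨2, by omega⟩) :=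
      hv ⟨1, by omega⟩
    have s2 : G2.StepValid (node ⟨2, by omega⟩) (edge ⟨2, by omega⟩) (node ⟨3, by omega⟩) :=
      hv ⟨2, by omega⟩
    rw [h00] at s0
    cases he0 : edge ⟨0, by omega⟩ <;> rw [he0] at s0 <;> simp [DMG.StepValid, G2] at s0
    have s0' : node ⟨1, by omega⟩ = S := s0
    rw [s0'] at s1
    cases he1 : edge ⟨1, by omega⟩ <;> rw [he1] at s1 <;> simp [DMG.StepValid, G2] at s1
    have s1' : node ⟨2, by omega⟩ = C ∨ node ⟨2, by omega⟩ = X := s1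
    rcases s1' with s1' | s1'
    · exact absurd (hp (s1'.trans h00.symm)) (by decide)
    · rw [s1', hl3] at s2
      cases he2 : edge ⟨2, by omega⟩ <;> rw [he2] at s2 <;> simp [DMG.StepValid, G2] at s2
      -- edges fwd, bwd, fwd; nodes C, S, X, Y; block at noncollider X (i = 1)
      have hnc : ¬ ((edge ⟨1, by omega⟩).headAtRight ∧ (edge ⟨2, by omega⟩).headAtLeft) := by
        rintro ⟨hc, -⟩
        rw [he1] at hc
        simp [EdgeDir.headAtRight] at hc
      have hmem : node ⟨2, by omega⟩ ∈ ({X, S} : Set N4) := by rw [s1']; simp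
      have hscc : node ⟨3, by omega⟩ ∉ G2.scc (node ⟨2, by omega⟩) := by
        rw [s1', hl3]
        rintro ⟨hanc, -⟩
        exact absurd (g2_anc_Y _ hanc) (by decide)
      exact Or.inr (Or.inr (Or.inr ⟨1, (by omega : 1 + 1 < 0 + 1 + 1 + 1), hnc, hmem,
        Or.inr ⟨he2, hscc⟩⟩))
  · omega

lemma sepYC2 : G2.sigmaSep Y C ({X, S} : Set N4) := by
  rintro ⟨n, node, edge, h0, hl, hv⟩ hp
  simp only [DMG.Walk.IsPath] at hp
  have hn4 : n + 1 ≤ 4 := by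
    have := Fintype.card_le_of_injective _ hp
    simpa [show Fintype.card N4 = 4 from rfl] using this
  obtain _|_|_|_|n := n
  · exact absurd ((show node 0 = node (Fin.last 0) from rfl).symm.trans hl ▸ h0) (by decide)
  · -- n = 1
    have s0 := hv ⟨0, by omega⟩
    have hl1 : node ⟨1, by omega⟩ = C := hl
    have h00 : node ⟨0, by omega⟩ = Y := h0
    rw [show Fin.castSucc ⟨0, by omega⟩ = ⟨0, by omega⟩ from rfl,
        show Fin.succ (⟨0, by omega⟩ : Fin 1) = ⟨1, by omega⟩ from rfl, h00, hl1] at s0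
    cases he : edge ⟨0, by omega⟩ <;> rw [he] at s0 <;> simp [DMG.StepValid, G2] at s0
  · -- n = 2
    have h00 : node ⟨0, by omega⟩ = Y := h0
    have hl2 : node ⟨2, by omega⟩ = C := hl
    have s0 : G2.StepValid (node ⟨0, by omega⟩) (edge ⟨0, by omega⟩) (node ⟨1, by omega⟩) :=
      hv ⟨0, by omega⟩
    have s1 : G2.StepValid (node ⟨1, by omega⟩) (edge ⟨1, by omega⟩) (node ⟨2, by omega⟩) :=
      hv ⟨1, by omega⟩
    rw [h00] at s0
    cases he0 : edge ⟨0, by omega⟩ <;> rw [he0] at s0 <;> simp [DMG.StepValid, G2] at s0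
    have s0' : node ⟨1, by omega⟩ = X := s0
    rw [s0', hl2] at s1
    cases he1 : edge ⟨1, by omega⟩ <;> rw [he1] at s1 <;> simp [DMG.StepValid, G2] at s1
  · -- n = 3
    have h00 : node ⟨0, by omega⟩ = Y := h0
    have hl3 : node ⟨3, by omega⟩ = C := hl
    have s0 : G2.StepValid (node ⟨0, by omega⟩) (edge ⟨0, by omega⟩) (node ⟨1, by omega⟩) :=
      hv ⟨0, by omega⟩
    have s1 : G2.StepValid (node ⟨1, by omega⟩) (edge ⟨1, by omega⟩) (node ⟨2, by omega⟩) :=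
      hv ⟨1, by omega⟩
    have s2 : G2.StepValid (node ⟨2, by omega⟩) (edge ⟨2, by omega⟩) (node ⟨3, by omega⟩) :=
      hv ⟨2, by omega⟩
    rw [h00] at s0
    cases he0 : edge ⟨0, by omega⟩ <;> rw [he0] at s0 <;> simp [DMG.StepValid, G2] at s0
    have s0' : node ⟨1, by omega⟩ = X := s0
    rw [s0'] at s1
    cases he1 : edge ⟨1, by omega⟩ <;> rw [he1] at s1 <;> simp [DMG.StepValid, G2] at s1
    have s1' : node ⟨2, by omega⟩ = S ∨ node ⟨2, by omega⟩ = Y := s1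
    rcases s1' with s1' | s1'
    · rw [s1', hl3] at s2
      cases he2 : edge ⟨2, by omega⟩ <;> rw [he2] at s2 <;> simp [DMG.StepValid, G2] at s2
      -- edges bwd, fwd, bwd; nodes Y, X, S, C; block at noncollider X (i = 0)
      have hnc : ¬ ((edge ⟨0, by omega⟩).headAtRight ∧ (edge ⟨1, by omega⟩).headAtLeft) := by
        rintro ⟨hc, -⟩
        rw [he0] at hc
        simp [EdgeDir.headAtRight] at hc
      have hmem : node ⟨1, by omega⟩ ∈ ({X, S} : Set N4) := by rw [s0']; simp
      have hscc : node ⟨0, by omega⟩ ∉ G2.scc (node ⟨1, by omega⟩) := by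
        rw [s0', h00]
        rintro ⟨hanc, -⟩
        exact absurd (g2_anc_Y _ hanc) (by decide)
      exact Or.inr (Or.inr (Or.inr ⟨0, (by omega : 0 + 1 < 0 + 1 + 1 + 1), hnc, hmem,
        Or.inl ⟨he0, hscc⟩⟩))
    · exact absurd (hp (s1'.trans h00.symm)) (by decide)
  · omega

lemma conXC1 (Cset : Set N4) (hC : C ∉ Cset) (hX : X ∉ Cset) : ¬ G1.sigmaSep X C Cset := by
  intro h
  have hb := h { n := 1, node := ![X,C], edge := ![.bwd], first_eq := rfl, last_eq := rfl,
                 valid := by intro i; fin_cases i; simp [DMG.StepValid, G1] }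
    (show Function.Injective ![X,C] by decide)
  simp [DMG.Walk.Blocked] at hb
  exact hb.elim hX hC

lemma conXY2 (Cset : Set N4) (hX : X ∉ Cset) (hY : Y ∉ Cset) : ¬ G2.sigmaSep X Y Cset := by
  intro h
  have hb := h { n := 1, node := ![X,Y], edge := ![.fwd], first_eq := rfl, last_eq := rfl,
                 valid := by intro i; fin_cases i; simp [DMG.StepValid, G2] }
    (show Function.Injective ![X,Y] by decide)
  simp [DMG.Walk.Blocked] at hb
  exact hb.elim hX hY

lemma conYX2 (Cset : Set N4) (hX : X ∉ Cset) (hY : Y ∉ Cset) : ¬ G2.sigmaSep Y X Cset := by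
  intro h
  have hb := h { n := 1, node := ![Y,X], edge := ![.bwd], first_eq := rfl, last_eq := rfl,
                 valid := by intro i; fin_cases i; simp [DMG.StepValid, G2] }
    (show Function.Injective ![Y,X] by decide)
  simp [DMG.Walk.Blocked] at hb
  exact hb.elim hY hX

lemma conXC2 (Cset : Set N4) (hC : C ∉ Cset) (hX : X ∉ Cset) (hS : S ∈ Cset) :
    ¬ G2.sigmaSep X C Cset := by
  intro h
  have hb := h { n := 2, node := ![X,S,C], edge := ![.fwd,.bwd], first_eq := rfl, last_eq := rfl,
                 valid := by intro i; fin_cases i <;> simp [DMG.StepValid, G2] }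
    (show Function.Injective ![X,S,C] by decide)
  simp only [DMG.Walk.Blocked, DMG.Walk.IsColliderAt, EdgeDir.headAtRight, EdgeDir.headAtLeft] at hb
  rcases hb with h1 | h1 | ⟨i, hi, hcol⟩ | ⟨i, hi, hncol, hrest⟩
  · exact hX h1
  · exact hC h1
  · obtain rfl : i = 0 := by omega
    simp at hcol
    exact hcol ⟨S, hS, .refl⟩
  · obtain rfl : i = 0 := by omega
    simp at hncol

lemma conXY1 (Cset : Set N4) (hX : X ∉ Cset) (hY : Y ∉ Cset) (hS : S ∈ Cset) :
    ¬ G1.sigmaSep X Y Cset := by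
  intro h
  have hb := h { n := 2, node := ![X,S,Y], edge := ![.fwd,.bwd], first_eq := rfl, last_eq := rfl,
                 valid := by intro i; fin_cases i <;> simp [DMG.StepValid, G1] }
    (show Function.Injective ![X,S,Y] by decide)
  simp only [DMG.Walk.Blocked, DMG.Walk.IsColliderAt, EdgeDir.headAtRight, EdgeDir.headAtLeft] at hb
  rcases hb with h1 | h1 | ⟨i, hi, hcol⟩ | ⟨i, hi, hncol, hrest⟩
  · exact hX h1
  · exact hY h1
  · obtain rfl : i = 0 := by omega
    simp at hcol
    exact hcol ⟨S, hS, .refl⟩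
  · obtain rfl : i = 0 := by omega
    simp at hncol

lemma conYX1 (Cset : Set N4) (hX : X ∉ Cset) (hY : Y ∉ Cset) (hS : S ∈ Cset) :
    ¬ G1.sigmaSep Y X Cset := by
  intro h
  have hb := h { n := 2, node := ![Y,S,X], edge := ![.fwd,.bwd], first_eq := rfl, last_eq := rfl,
                 valid := by intro i; fin_cases i <;> simp [DMG.StepValid, G1] }
    (show Function.Injective ![Y,S,X] by decide)
  simp only [DMG.Walk.Blocked, DMG.Walk.IsColliderAt, EdgeDir.headAtRight, EdgeDir.headAtLeft] at hb
  rcases hb with h1 | h1 | ⟨i, hi, hcol⟩ | ⟨i, hi, hncol, hrest⟩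
  · exact hY h1
  · exact hX h1
  · obtain rfl : i = 0 := by omega
    simp at hcol
    exact hcol ⟨S, hS, .refl⟩
  · obtain rfl : i = 0 := by omega
    simp at hncol

lemma conCY1 (Cset : Set N4) (hC : C ∉ Cset) (hX : X ∉ Cset) (hY : Y ∉ Cset) (hS : S ∈ Cset) :
    ¬ G1.sigmaSep C Y Cset := by
  intro h
  have hb := h { n := 3, node := ![C,X,S,Y], edge := ![.fwd,.fwd,.bwd],
                 first_eq := rfl, last_eq := rfl,
                 valid := by intro i; fin_cases i <;> simp [DMG.StepValid, G1] <;> rfl }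
    (show Function.Injective ![C,X,S,Y] by decide)
  simp only [DMG.Walk.Blocked, DMG.Walk.IsColliderAt, EdgeDir.headAtRight, EdgeDir.headAtLeft] at hb
  rcases hb with h1 | h1 | ⟨i, hi, hcol⟩ | ⟨i, hi, hncol, hmem, hrest⟩
  · exact hC h1
  · exact hY h1
  · have : i = 0 ∨ i = 1 := by omega
    rcases this with rfl | rfl
    · simp at hcol
    · simp at hcol
      exact hcol ⟨S, hS, .refl⟩
  · have : i = 0 ∨ i = 1 := by omega
    rcases this with rfl | rfl
    · simp at hmem
      exact hX hmem
    · simp at hncol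

lemma conYC1 (Cset : Set N4) (hC : C ∉ Cset) (hX : X ∉ Cset) (hY : Y ∉ Cset) (hS : S ∈ Cset) :
    ¬ G1.sigmaSep Y C Cset := by
  intro h
  have hb := h { n := 3, node := ![Y,S,X,C], edge := ![.fwd,.bwd,.bwd],
                 first_eq := rfl, last_eq := rfl,
                 valid := by intro i; fin_cases i <;> simp [DMG.StepValid, G1] <;> rfl }
    (show Function.Injective ![Y,S,X,C] by decide)
  simp only [DMG.Walk.Blocked, DMG.Walk.IsColliderAt, EdgeDir.headAtRight, EdgeDir.headAtLeft] at hb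
  rcases hb with h1 | h1 | ⟨i, hi, hcol⟩ | ⟨i, hi, hncol, hmem, hrest⟩
  · exact hY h1
  · exact hC h1
  · have : i = 0 ∨ i = 1 := by omega
    rcases this with rfl | rfl
    · simp at hcol
      exact hcol ⟨S, hS, .refl⟩
    · simp at hcol
  · have : i = 0 ∨ i = 1 := by omega
    rcases this with rfl | rfl
    · simp at hncol
    · simp at hmem
      exact hX hmem

lemma conCY2 (Cset : Set N4) (hC : C ∉ Cset) (hX : X ∉ Cset) (hY : Y ∉ Cset) (hS : S ∈ Cset) :
    ¬ G2.sigmaSep C Y Cset := by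
  intro h
  have hb := h { n := 3, node := ![C,S,X,Y], edge := ![.fwd,.bwd,.fwd],
                 first_eq := rfl, last_eq := rfl,
                 valid := by intro i; fin_cases i <;> simp [DMG.StepValid, G2] <;> rfl }
    (show Function.Injective ![C,S,X,Y] by decide)
  simp only [DMG.Walk.Blocked, DMG.Walk.IsColliderAt, EdgeDir.headAtRight, EdgeDir.headAtLeft] at hb
  rcases hb with h1 | h1 | ⟨i, hi, hcol⟩ | ⟨i, hi, hncol, hmem, hrest⟩
  · exact hC h1
  · exact hY h1
  · have : i = 0 ∨ i = 1 := by omega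
    rcases this with rfl | rfl
    · simp at hcol
      exact hcol ⟨S, hS, .refl⟩
    · simp at hcol
  · have : i = 0 ∨ i = 1 := by omega
    rcases this with rfl | rfl
    · simp at hncol
    · simp at hmem
      exact hX hmem

lemma conYC2 (Cset : Set N4) (hC : C ∉ Cset) (hX : X ∉ Cset) (hY : Y ∉ Cset) (hS : S ∈ Cset) :
    ¬ G2.sigmaSep Y C Cset := by
  intro h
  have hb := h { n := 3, node := ![Y,X,S,C], edge := ![.bwd,.fwd,.bwd],
                 first_eq := rfl, last_eq := rfl,
                 valid := by intro i; fin_cases i <;> simp [DMG.StepValid, G2] <;> rfl }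
    (show Function.Injective ![Y,X,S,C] by decide)
  simp only [DMG.Walk.Blocked, DMG.Walk.IsColliderAt, EdgeDir.headAtRight, EdgeDir.headAtLeft] at hb
  rcases hb with h1 | h1 | ⟨i, hi, hcol⟩ | ⟨i, hi, hncol, hmem, hrest⟩
  · exact hY h1
  · exact hC h1
  · have : i = 0 ∨ i = 1 := by omega
    rcases this with rfl | rfl
    · simp at hcol
    · simp at hcol
      exact hcol ⟨S, hS, .refl⟩
  · have : i = 0 ∨ i = 1 := by omega
    rcases this with rfl | rfl
    · simp at hmem
      exact hX hmem
    · simp at hncol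

lemma notmem_aux {A B : N4} {Z : Set N4} (hZ : Z ⊆ ({C, X, Y} : Set N4) \ {A, B}) {v : N4}
    (hv : v ∈ ({A, B} : Set N4)) (hvS : v ≠ S) : v ∉ Z ∪ {S} := by
  rintro (h | h)
  · exact (hZ h).2 hv
  · exact hvS h

lemma memS {Z : Set N4} : S ∈ Z ∪ {S} := Set.mem_union_right _ rfl


open N4 in
/-- witness for the impossibility of three-variable causal
discovery under selection bias: (a) in both graphs, no node other than `C` is
an ancestor of `C`; (b) both graphs have the same σ-separations among
`{C, X, Y}` when conditioning always includes `S`; (c) `X ∈ an(Y)` in `G2` but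
not in `G1`. -/
theorem three_variable_impossibility_witness :
    ((∀ v : N4, G1.Anc v C → v = C) ∧ (∀ v : N4, G2.Anc v C → v = C)) ∧
    (∀ A B : N4, A ∈ ({C, X, Y} : Set N4) → B ∈ ({C, X, Y} : Set N4) → A ≠ B →
      ∀ Z : Set N4, Z ⊆ ({C, X, Y} : Set N4) \ {A, B} →
        (G1.sigmaSep A B (Z ∪ {S}) ↔ G2.sigmaSep A B (Z ∪ {S}))) ∧
    (G2.Anc X Y ∧ ¬ G1.Anc X Y) := by
  refine ⟨⟨g1_anc_C, g2_anc_C⟩, ?_, ?_, ?_⟩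
  · intro A B hA hB hAB Z hZ
    simp only [Set.mem_insert_iff, Set.mem_singleton_iff] at hA hB
    rcases hA with rfl | rfl | rfl <;> rcases hB with rfl | rfl | rfl
    · exact absurd rfl hAB
    · -- C, X
      exact iff_of_false
        (conCX1 _ (notmem_aux hZ (by simp) (by decide)) (notmem_aux hZ (by simp) (by decide)))
        (conCX2 _ (notmem_aux hZ (by simp) (by decide)) (notmem_aux hZ (by simp) (by decide)) memS)
    · -- C, Y
      by_cases hx : X ∈ Z
      · have hset : Z ∪ {S} = ({X, S} : Set N4) := by
          apply Set.Subset.antisymm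
          · rintro v (h | h)
            · have h1 := (hZ h).1
              have h2 := (hZ h).2
              simp only [Set.mem_insert_iff, Set.mem_singleton_iff] at h1 h2 ⊢
              tauto
            · exact Or.inr h
          · rintro v (rfl | h)
            · exact Or.inl hx
            · exact Or.inr h
        rw [hset]
        exact iff_of_true sepCY1 sepCY2
      · have hxm : X ∉ Z ∪ {S} := by rintro (h | h); exacts [hx h, absurd h (by decide)]
        exact iff_of_false
          (conCY1 _ (notmem_aux hZ (by simp) (by decide)) hxm
            (notmem_aux hZ (by simp) (by decide)) memS)
          (conCY2 _ (notmem_aux hZ (by simp) (by decide)) hxm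
            (notmem_aux hZ (by simp) (by decide)) memS)
    · -- X, C
      exact iff_of_false
        (conXC1 _ (notmem_aux hZ (by simp) (by decide)) (notmem_aux hZ (by simp) (by decide)))
        (conXC2 _ (notmem_aux hZ (by simp) (by decide)) (notmem_aux hZ (by simp) (by decide)) memS)
    · exact absurd rfl hAB
    · -- X, Y
      exact iff_of_false
        (conXY1 _ (notmem_aux hZ (by simp) (by decide)) (notmem_aux hZ (by simp) (by decide)) memS)
        (conXY2 _ (notmem_aux hZ (by simp) (by decide)) (notmem_aux hZ (by simp) (by decide)))
    · -- Y, C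
      by_cases hx : X ∈ Z
      · have hset : Z ∪ {S} = ({X, S} : Set N4) := by
          apply Set.Subset.antisymm
          · rintro v (h | h)
            · have h1 := (hZ h).1
              have h2 := (hZ h).2
              simp only [Set.mem_insert_iff, Set.mem_singleton_iff] at h1 h2 ⊢
              tauto
            · exact Or.inr h
          · rintro v (rfl | h)
            · exact Or.inl hx
            · exact Or.inr h
        rw [hset]
        exact iff_of_true sepYC1 sepYC2
      · have hxm : X ∉ Z ∪ {S} := by rintro (h | h); exacts [hx h, absurd h (by decide)]
        exact iff_of_false
          (conYC1 _ (notmem_aux hZ (by simp) (by decide)) hxm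
            (notmem_aux hZ (by simp) (by decide)) memS)
          (conYC2 _ (notmem_aux hZ (by simp) (by decide)) hxm
            (notmem_aux hZ (by simp) (by decide)) memS)
    · -- Y, X
      exact iff_of_false
        (conYX1 _ (notmem_aux hZ (by simp) (by decide)) (notmem_aux hZ (by simp) (by decide)) memS)
        (conYX2 _ (notmem_aux hZ (by simp) (by decide)) (notmem_aux hZ (by simp) (by decide)))
    · exact absurd rfl hAB
  · exact Relation.ReflTransGen.single (Or.inr (Or.inr ⟨rfl, rfl⟩))
  · intro h
    rcases g1_anc_X Y h with h' | h' <;> exact absurd h' (by decide)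
end

section
/- (Latent projection preserves ancestral relations.) Let G be a directed mixed graph and M ⊆ V(G). For all nodes X, Y ∈ M: X ∈ an(Y) in G if and only if X is an ancestor of Y in the latent projection of G onto M. -/
/-!
A directed path of `G` between two nodes of `M` is cut, at its successive visits to `M`,
into directed segments whose interior avoids `M`; each segment is a directed edge of the
latent projection. Conversely every directed edge of the projection unfolds into a directed
path of `G`.
-/

namespace DMG

variable {α : Type*} {G : DMG α} {M : Set α} {x y z : α}

theorem dirPathAvoiding_of_dir (h : G.dir x y) : DirPathAvoiding G M x y :=
  ⟨[], .cons_cons h (.singleton y), by simp⟩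

theorem DirPathAvoiding.cons (hxy : G.dir x y) (hy : y ∉ M) (h : DirPathAvoiding G M y z) :
    DirPathAvoiding G M x z := by
  obtain ⟨l, hl, hlM⟩ := h
  exact ⟨y :: l, List.IsChain.cons_cons hxy hl, by simpa [hy] using hlM⟩

theorem DirPathAvoiding.anc (h : DirPathAvoiding G M x y) : G.Anc x y := by
  obtain ⟨l, hl, -⟩ := h
  exact List.relationReflTransGen_of_exists_isChain_cons _ hl (by simp)

theorem latentProj_anc_of_reflGen_dirPathAvoiding (hx : x ∈ M) (hy : y ∈ M)
    (h : Relation.ReflGen (DirPathAvoiding G M) x y) :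
    (G.latentProj M).Anc ⟨x, hx⟩ ⟨y, hy⟩ := by
  rcases h with _ | h
  · exact .refl
  · by_cases hxy : x = y
    · subst hxy
      exact .refl
    · exact .single ⟨hxy, h⟩

theorem anc_of_latentProj_anc {a b : M} (h : (G.latentProj M).Anc a b) : G.Anc a b :=
  h.lift' Subtype.val fun _ _ hab => hab.2.anc

theorem exists_reflGen_dirPathAvoiding_latentProj_anc {u : α} {b : M} (h : G.Anc u b) :
    ∃ c : M, Relation.ReflGen (DirPathAvoiding G M) u c ∧ (G.latentProj M).Anc c b := by
  induction h using Relation.ReflTransGen.head_induction_on with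
  | refl => exact ⟨b, .refl, .refl⟩
  | @head u v huv _ ih =>
    obtain ⟨c, hvc, hcb⟩ := ih
    by_cases hv : v ∈ M
    · refine ⟨⟨v, hv⟩, .single (dirPathAvoiding_of_dir huv), ?_⟩
      exact (latentProj_anc_of_reflGen_dirPathAvoiding hv c.2 hvc).trans hcb
    · rcases hvc with _ | hvc
      · exact absurd c.2 hv
      · exact ⟨c, .single (hvc.cons huv hv), hcb⟩

theorem latentProj_anc_of_anc {a b : M} (h : G.Anc a b) : (G.latentProj M).Anc a b := by
  obtain ⟨c, hac, hcb⟩ := exists_reflGen_dirPathAvoiding_latentProj_anc h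
  exact (latentProj_anc_of_reflGen_dirPathAvoiding a.2 c.2 hac).trans hcb

end DMG

theorem latent_projection_preserves_ancestors_general
    {α : Type*} (G : DMG α) (M : Set α) (X Y : M) :
    G.Anc X.1 Y.1 ↔ (G.latentProj M).Anc X Y :=
  ⟨DMG.latentProj_anc_of_anc, DMG.anc_of_latentProj_anc⟩

/-- latent projection preserves ancestral relations. -/
theorem latent_projection_preserves_ancestors
    {α : Type*} [Fintype α] (G : DMG α) (M : Set α) (X Y : M) :
    G.Anc X.1 Y.1 ↔ (G.latentProj M).Anc X Y :=
  latent_projection_preserves_ancestors_general G M X Y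
end

section
/- (Latent projection preserves confounding.) Let G be a directed mixed graph and M ⊆ V(G). For all distinct nodes X, Y ∈ M: if X and Y are confounded in G, then X and Y are confounded in the latent projection of G onto M. Consequently, if X and Y are unconfounded in the latent projection of G onto M, then they are unconfounded in G. -/
namespace EdgeDir

theorem headAtLeft_iff_ne_fwd {e : EdgeDir} : e.headAtLeft ↔ e ≠ .fwd := by
  cases e <;> simp [headAtLeft]

theorem headAtRight_iff_ne_bwd {e : EdgeDir} : e.headAtRight ↔ e ≠ .bwd := by
  cases e <;> simp [headAtRight]

end EdgeDir

theorem Nat.exists_increasing_enumeration {p : ℕ → Prop} {n : ℕ} (h0 : p 0) (hn : p n)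
    (hn0 : n ≠ 0) :
    ∃ (s : ℕ → ℕ) (r : ℕ), s 0 = 0 ∧ s r = n ∧ (∀ i, p (s i)) ∧
      (∀ {i j}, i < j → j ≤ r → s i < s j) ∧ ∀ i t, s i < t → t < s (i + 1) → ¬ p t := by
  classical
  have hr : Nat.nth p (Nat.count p n) = n := Nat.nth_count hn
  refine ⟨Nat.nth p, Nat.count p n, Nat.nth_zero_of_zero h0, hr, fun i => ?_,
    fun hij hj => Nat.nth_lt_nth' hij fun hf =>
      hj.trans_lt (Nat.lt_card_toFinset_of_nth_ne_zero (hr.trans_ne hn0) hf),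
    fun i t h1 h2 ht => (Nat.le_nth_of_lt_nth_succ h2 ht).not_gt h1⟩
  rcases Nat.range_nth_subset (p := p) ⟨i, rfl⟩ with hi | hi
  · exact hi ▸ h0
  · exact hi

namespace DMG

variable {α : Type*} {G : DMG α} {M : Set α}

def Walk.ofFn (G : DMG α) (m : ℕ) (N : ℕ → α) (E : ℕ → EdgeDir) {x y : α} (h0 : N 0 = x)
    (hm : N m = y) (hv : ∀ t < m, G.StepValid (N t) (E t) (N (t + 1))) : Walk G x y where
  n := m
  node i := N i
  edge i := E i
  first_eq := h0
  last_eq := hm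
  valid i := hv i i.isLt

theorem Walk.isPath_ofFn {m : ℕ} {N : ℕ → α} {E : ℕ → EdgeDir} {x y : α} {h0 : N 0 = x}
    {hm : N m = y} {hv : ∀ t < m, G.StepValid (N t) (E t) (N (t + 1))}
    (hN : Set.InjOn N (Set.Iic m)) : (Walk.ofFn G m N E h0 hm hv).IsPath :=
  fun i j hij => Fin.ext <| hN (Nat.lt_succ_iff.1 i.isLt) (Nat.lt_succ_iff.1 j.isLt) hij

theorem dirPathAvoiding_of_forall_dir (f : ℕ → α) (m : ℕ) (hm : 0 < m)
    (hdir : ∀ t < m, G.dir (f t) (f (t + 1))) (hM : ∀ t, 0 < t → t < m → f t ∉ M) :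
    G.DirPathAvoiding M (f 0) (f m) := by
  induction m generalizing f with
  | zero => omega
  | succ m ih =>
    rcases Nat.eq_zero_or_pos m with rfl | hm'
    · exact ⟨[], List.IsChain.cons_cons (hdir 0 one_pos) (List.isChain_singleton _), by simp⟩
    · obtain ⟨l, hl, hlM⟩ := ih (fun t => f (t + 1)) hm' (fun t ht => hdir (t + 1) (by omega))
        (fun t ht ht' => hM (t + 1) (by omega) (by omega))
      exact ⟨f 1 :: l, List.IsChain.cons_cons (hdir 0 (by omega)) hl,
        List.forall_mem_cons.2 ⟨hM 1 one_pos (by omega), hlM⟩⟩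

/-- Paths encoded by total functions on `ℕ`: only `N 0, …, N m` and `E 0, …, E (m - 1)`
matter, `E t` being the edge between `N t` and `N (t + 1)`. -/
structure IsColliderFreePath (G : DMG α) (N : ℕ → α) (E : ℕ → EdgeDir) (m : ℕ) : Prop where
  valid : ∀ t < m, G.StepValid (N t) (E t) (N (t + 1))
  injOn : Set.InjOn N (Set.Iic m)
  not_collider : ∀ t, t + 1 < m → ¬ ((E t).headAtRight ∧ (E (t + 1)).headAtLeft)

structure IsConfoundingSeq (G : DMG α) (N : ℕ → α) (E : ℕ → EdgeDir) (m : ℕ) : Prop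
    extends G.IsColliderFreePath N E m where
  pos : 0 < m
  headAtLeft_first : (E 0).headAtLeft
  headAtRight_last : (E (m - 1)).headAtRight

theorem confounded_iff {x y : α} :
    G.Confounded x y ↔ ∃ N E m, G.IsConfoundingSeq N E m ∧ N 0 = x ∧ N m = y := by
  constructor
  · rintro ⟨w, hpath, hpos, hfirst, hlast, hnc⟩
    let N : ℕ → α := fun t => w.node ⟨min t w.n, by omega⟩
    let E : ℕ → EdgeDir := fun t => if h : t < w.n then w.edge ⟨t, h⟩ else .fwd
    have hN : ∀ t (ht : t ≤ w.n), N t = w.node ⟨t, by omega⟩ := fun t ht =>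
      congrArg w.node (Fin.ext (min_eq_left ht))
    have hE : ∀ t (ht : t < w.n), E t = w.edge ⟨t, ht⟩ := fun t ht => dif_pos ht
    refine ⟨N, E, w.n, ⟨⟨fun t ht => ?_, fun i hi j hj hij => ?_, fun t ht => ?_⟩, hpos, ?_, ?_⟩,
      ?_, ?_⟩
    · rw [hN t ht.le, hN (t + 1) ht, hE t ht]
      exact w.valid ⟨t, ht⟩
    · rw [hN i hi, hN j hj] at hij
      exact congrArg Fin.val (hpath hij)
    · rw [hE t (by omega), hE (t + 1) ht]
      exact hnc t ht
    · rwa [hE 0 hpos]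
    · rwa [hE (w.n - 1) (by omega)]
    · rw [hN 0 (Nat.zero_le _)]
      exact w.first_eq
    · rw [hN w.n le_rfl]
      exact w.last_eq
  · rintro ⟨N, E, m, h, rfl, rfl⟩
    exact ⟨Walk.ofFn G m N E rfl rfl h.valid, Walk.isPath_ofFn h.injOn, h.pos,
      h.headAtLeft_first, h.headAtRight_last, h.not_collider⟩

namespace IsColliderFreePath

variable {N : ℕ → α} {E : ℕ → EdgeDir} {m : ℕ}

theorem shift (h : G.IsColliderFreePath N E m) {a b : ℕ} (hab : a ≤ b) (hbm : b ≤ m) :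
    G.IsColliderFreePath (fun t => N (a + t)) (fun t => E (a + t)) (b - a) where
  valid t ht := by simpa only [Nat.add_assoc] using h.valid (a + t) (by omega)
  injOn i hi j hj hij := by
    have := h.injOn (Set.mem_Iic.2 (by have := Set.mem_Iic.1 hi; omega))
      (Set.mem_Iic.2 (by have := Set.mem_Iic.1 hj; omega)) hij
    omega
  not_collider t ht := by simpa only [Nat.add_assoc] using h.not_collider (a + t) (by omega)

theorem edge_eq_fwd (h : G.IsColliderFreePath N E m) (h0 : E 0 = .fwd) : ∀ t < m, E t = .fwd
  | 0, _ => h0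
  | t + 1, ht => by
    have := h.not_collider t ht
    rw [EdgeDir.headAtRight_iff_ne_bwd, EdgeDir.headAtLeft_iff_ne_fwd,
      h.edge_eq_fwd h0 t (by omega)] at this
    simpa using this

theorem edge_eq_bwd (h : G.IsColliderFreePath N E m) (hlast : E (m - 1) = .bwd) :
    ∀ t < m, E t = .bwd := by
  suffices H : ∀ k < m, E (m - 1 - k) = .bwd by
    intro t ht
    simpa [show m - 1 - (m - 1 - t) = t by omega] using H (m - 1 - t) (by omega)
  intro k
  induction k with
  | zero => exact fun _ => by simpa using hlast
  | succ k ih =>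
    intro hk
    have := h.not_collider (m - 1 - (k + 1)) (by omega)
    rw [show m - 1 - (k + 1) + 1 = m - 1 - k by omega, ih (by omega),
      EdgeDir.headAtRight_iff_ne_bwd, EdgeDir.headAtLeft_iff_ne_fwd] at this
    simpa using this

theorem exists_latentProj_step (h : G.IsColliderFreePath N E m) (hm : 0 < m)
    (hM : ∀ t, 0 < t → t < m → N t ∉ M) {x y : M} (hx : N 0 = x) (hy : N m = y) :
    ∃ d, (G.latentProj M).StepValid x d y ∧ (d.headAtLeft ↔ (E 0).headAtLeft) ∧
      (d.headAtRight ↔ (E (m - 1)).headAtRight) := by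
  have hxy : x.1 ≠ y.1 := by
    rw [← hx, ← hy]
    exact fun e => hm.ne (h.injOn (Set.mem_Iic.2 (Nat.zero_le _)) (Set.mem_Iic.2 le_rfl) e)
  simp only [EdgeDir.headAtLeft_iff_ne_fwd, EdgeDir.headAtRight_iff_ne_bwd]
  by_cases hfwd : E 0 = .fwd
  · have hall := h.edge_eq_fwd hfwd
    refine ⟨.fwd, ⟨hxy, ?_⟩, by simp [hfwd], by simp [hall (m - 1) (by omega)]⟩
    rw [← hx, ← hy]
    exact dirPathAvoiding_of_forall_dir N m hm
      (fun t ht => by simpa [StepValid, hall t ht] using h.valid t ht) hM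
  by_cases hbwd : E (m - 1) = .bwd
  · have hall := h.edge_eq_bwd hbwd
    refine ⟨.bwd, ⟨hxy.symm, ?_⟩, by simp [hall 0 hm], by simp [hbwd]⟩
    have := dirPathAvoiding_of_forall_dir (G := G) (M := M) (fun t => N (m - t)) m hm
      (fun t ht => by
        have := h.valid (m - (t + 1)) (by omega)
        rwa [hall _ (by omega), StepValid, show m - (t + 1) + 1 = m - t by omega] at this)
      (fun t ht ht' => hM (m - t) (by omega) (by omega))
    simpa [hx, hy] using this
  refine ⟨.bi, ⟨hxy, Or.inl ⟨Walk.ofFn G m N E hx hy h.valid, Walk.isPath_ofFn h.injOn,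
    ⟨hm, EdgeDir.headAtLeft_iff_ne_fwd.2 hfwd, EdgeDir.headAtRight_iff_ne_bwd.2 hbwd⟩,
    fun i hi => ⟨hM (i + 1) (by omega) hi, h.not_collider i hi⟩⟩⟩, by simp [hfwd], by simp [hbwd]⟩

theorem exists_latentProj_step_of_lt (h : G.IsColliderFreePath N E m) {a b : ℕ} (hab : a < b)
    (hbm : b ≤ m) (hM : ∀ t, a < t → t < b → N t ∉ M) (ha : N a ∈ M) (hb : N b ∈ M) :
    ∃ d, (G.latentProj M).StepValid ⟨N a, ha⟩ d ⟨N b, hb⟩ ∧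
      (d.headAtLeft ↔ (E a).headAtLeft) ∧ (d.headAtRight ↔ (E (b - 1)).headAtRight) := by
  obtain ⟨d, hd⟩ := (h.shift hab.le hbm).exists_latentProj_step (by omega)
    (fun t ht ht' => hM (a + t) (by omega) (by omega)) (x := ⟨N a, ha⟩) (y := ⟨N b, hb⟩) rfl
    (by simp only [Nat.add_sub_cancel' hab.le])
  rw [Nat.add_zero, show a + (b - a - 1) = b - 1 by omega] at hd
  exact ⟨d, hd⟩

end IsColliderFreePath

theorem IsConfoundingSeq.confounded_latentProj {N : ℕ → α} {E : ℕ → EdgeDir} {n : ℕ}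
    (h : G.IsConfoundingSeq N E n) (h0 : N 0 ∈ M) (hn : N n ∈ M) :
    (G.latentProj M).Confounded ⟨N 0, h0⟩ ⟨N n, hn⟩ := by
  -- `s 0 < ⋯ < s r` are the positions at which the path visits `M`.
  obtain ⟨s, r, hs0, hsr, hps, hs_lt, hgap⟩ := Nat.exists_increasing_enumeration
    (p := fun j => N j ∈ M ∧ j ≤ n) ⟨h0, Nat.zero_le _⟩ ⟨hn, le_rfl⟩ h.pos.ne'
  have hr : 0 < r := Nat.pos_of_ne_zero fun hr => h.pos.ne (by rw [← hsr, hr, hs0])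
  have hstep : ∀ i, ∃ d, i < r →
      (G.latentProj M).StepValid ⟨N (s i), (hps i).1⟩ d ⟨N (s (i + 1)), (hps (i + 1)).1⟩ ∧
      (d.headAtLeft ↔ (E (s i)).headAtLeft) ∧
      (d.headAtRight ↔ (E (s (i + 1) - 1)).headAtRight) := by
    intro i
    by_cases hi : i < r
    · obtain ⟨d, hd⟩ := h.exists_latentProj_step_of_lt (hs_lt (Nat.lt_add_one i) hi)
        (hps (i + 1)).2 (fun t h1 h2 hM => hgap i t h1 h2 ⟨hM, h2.le.trans (hps (i + 1)).2⟩)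
        (hps i).1 (hps (i + 1)).1
      exact ⟨d, fun _ => hd⟩
    · exact ⟨.fwd, fun hi' => absurd hi' hi⟩
  choose d hd using hstep
  rw [confounded_iff]
  refine ⟨fun i => ⟨N (s i), (hps i).1⟩, d, r,
    ⟨⟨fun i hi => (hd i hi).1, fun i hi j hj hij => ?_, fun i hi hcol => ?_⟩, hr, ?_, ?_⟩,
    Subtype.ext (congrArg N hs0), Subtype.ext (congrArg N hsr)⟩
  · have hsij := h.injOn (hps i).2 (hps j).2 (congrArg Subtype.val hij)
    rcases lt_trichotomy i j with hlt | rfl | hgt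
    · exact absurd hsij (hs_lt hlt hj).ne
    · rfl
    · exact absurd hsij (hs_lt hgt hi).ne'
  · have hpos := hs_lt (by omega : 0 < i + 1) hi.le
    have hlt := hs_lt hi le_rfl
    rw [(hd i (by omega)).2.2, (hd (i + 1) hi).2.1] at hcol
    refine h.not_collider (s (i + 1) - 1) (by omega) ?_
    rwa [Nat.sub_add_cancel (by omega)]
  · rw [(hd 0 hr).2.1, hs0]
    exact h.headAtLeft_first
  · rw [(hd (r - 1) (by omega)).2.2, Nat.sub_add_cancel hr, hsr]
    exact h.headAtRight_last

theorem Confounded.latentProj {x y : α} (h : G.Confounded x y) (hx : x ∈ M) (hy : y ∈ M) :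
    (G.latentProj M).Confounded ⟨x, hx⟩ ⟨y, hy⟩ := by
  obtain ⟨N, E, n, hN, rfl, rfl⟩ := confounded_iff.1 h
  exact hN.confounded_latentProj hx hy

end DMG

theorem latent_projection_preserves_confounding_general
    {α : Type*} (G : DMG α) (M : Set α) (X Y : M) :
    (G.Confounded X.1 Y.1 → (G.latentProj M).Confounded X Y) ∧
    (¬ (G.latentProj M).Confounded X Y → ¬ G.Confounded X.1 Y.1) :=
  ⟨fun h => h.latentProj X.2 Y.2, fun h hc => h (hc.latentProj X.2 Y.2)⟩

/-- latent projection preserves confounding; consequently,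
unconfoundedness in the projection implies unconfoundedness in `G`. -/
theorem latent_projection_preserves_confounding
    {α : Type*} [Fintype α] (G : DMG α) (M : Set α) (X Y : M) (hXY : X ≠ Y) :
    (G.Confounded X.1 Y.1 → (G.latentProj M).Confounded X Y) ∧
    (¬ (G.latentProj M).Confounded X Y → ¬ G.Confounded X.1 Y.1) :=
  latent_projection_preserves_confounding_general G M X Y
end
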